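/- arXiv:2006.02702 — 9 statements merged into one kernel-verified Lean document; each statement's English description precedes it below -/
import Mathlib

section
/- Let k ≥ 1 be an integer and set k' = ⌊(k−1)/2⌋. Then the rational number ∑_{a=0, a≠k/2}^{k} (−1)^a · binom(k,a) / (k − 2a) (the sum over all a ∈ {0,…,k} with k − 2a ≠ 0) equals 2^k · (−2)^{k'} · k'! / k!! if k is odd, and equals 0 if k is even. -/
/-!
Write `S(x) = ∑ₐ (-1)ᵃ C(n,a) / (x - c a)`. Pascal's rule gives `S_{n+1}(x) = S_n(x) - S_n(x - c)`,
and by induction `S_n(x) = (-1)ⁿ cⁿ n! / ∏_{a ≤ n} (x - c a)` (the partial fraction expansion of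
the right-hand side). For odd `k = 2m + 1`, `c = 2` and `x = k` the product is
`(-1)^(m+1) (k‼)²`, and `k! = k‼ 2ᵐ m!` finishes the computation. For even `k` the terms
at `a` and `k - a` cancel.
-/

open Finset Nat

theorem sum_alternating_choose_succ_mul {R : Type*} [CommRing R] (n : ℕ) (f : ℕ → R) :
    ∑ a ∈ range (n + 2), (-1) ^ a * ((n + 1).choose a : R) * f a =
      ∑ a ∈ range (n + 1), (-1) ^ a * (n.choose a : R) * f a -
        ∑ a ∈ range (n + 1), (-1) ^ a * (n.choose a : R) * f (a + 1) := by
  have hlast : ∑ a ∈ range (n + 2), (-1) ^ a * (n.choose a : R) * f a =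
      ∑ a ∈ range (n + 1), (-1) ^ a * (n.choose a : R) * f a := by
    simp [sum_range_succ _ (n + 1)]
  rw [← hlast, sum_range_succ', sum_range_succ' _ (n + 1), ← sub_add_eq_add_sub,
    ← sum_sub_distrib]
  simp only [choose_succ_succ, cast_add, choose_zero_right]
  congr 1
  exact sum_congr rfl fun a _ => by ring

theorem sum_alternating_choose_div_sub_mul {K : Type*} [Field K] (n : ℕ) (c x : K)
    (hx : ∀ a ∈ range (n + 1), x - c * a ≠ 0) :
    ∑ a ∈ range (n + 1), (-1) ^ a * (n.choose a : K) / (x - c * a) =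
      (-1) ^ n * c ^ n * n ! / ∏ a ∈ range (n + 1), (x - c * a) := by
  induction n generalizing x with
  | zero => simp
  | succ n ih =>
    have hshift (a : ℕ) : x - c * (a + 1 : ℕ) = x - c - c * a := by push_cast; ring
    have hx₀ : ∀ a ∈ range (n + 1), x - c * a ≠ 0 := fun a ha =>
      hx a (mem_range.2 (lt_succ_of_lt (mem_range.1 ha)))
    have hx₁ : ∀ a ∈ range (n + 1), x - c - c * a ≠ 0 := fun a ha =>
      hshift a ▸ hx (a + 1) (mem_range.2 (succ_lt_succ (mem_range.1 ha)))
    have hP := prod_ne_zero_iff.2 hx₀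
    have hQ := prod_ne_zero_iff.2 hx₁
    have hR := prod_ne_zero_iff.2 hx
    have hRP : ∏ a ∈ range (n + 2), (x - c * a) =
        (∏ a ∈ range (n + 1), (x - c * a)) * (x - c * (n + 1)) := by
      rw [prod_range_succ]; push_cast; rfl
    have hRQ : ∏ a ∈ range (n + 2), (x - c * a) =
        (∏ a ∈ range (n + 1), (x - c - c * a)) * x := by
      simp only [prod_range_succ', hshift, cast_zero, mul_zero, sub_zero]
    have hpascal := sum_alternating_choose_succ_mul n (fun a => (x - c * a)⁻¹)
    simp only [hshift, ← div_eq_mul_inv] at hpascal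
    rw [hpascal, ih x hx₀, ih (x - c) hx₁, div_sub_div _ _ hP hQ,
      div_eq_div_iff (mul_ne_zero hP hQ) hR, factorial_succ]
    push_cast
    linear_combination (-1) ^ n * c ^ n * (n ! : K) *
      ((∏ a ∈ range (n + 1), (x - c - c * a)) * hRP - (∏ a ∈ range (n + 1), (x - c * a)) * hRQ)

theorem prod_range_odd_sub_two_mul {R : Type*} [CommRing R] (m : ℕ) :
    ∏ a ∈ range (2 * m + 2), ((2 * m + 1 : ℕ) - 2 * a : R) =
      (-1) ^ (m + 1) * ((2 * m + 1)‼ : R) ^ 2 := by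
  induction m with
  | zero => norm_num [prod_range_succ]
  | succ m ih =>
    have hshift (a : ℕ) :
        ((2 * (m + 1) + 1 : ℕ) - 2 * (a + 1 : ℕ) : R) = (2 * m + 1 : ℕ) - 2 * a := by
      push_cast; ring
    rw [show 2 * (m + 1) + 2 = 2 * m + 2 + 1 + 1 by ring, prod_range_succ, prod_range_succ']
    simp only [hshift, ih]
    rw [show 2 * (m + 1) + 1 = 2 * m + 1 + 2 by ring, doubleFactorial_add_two]
    push_cast
    ring

theorem factorial_two_mul_add_one (m : ℕ) : (2 * m + 1)! = (2 * m + 1)‼ * 2 ^ m * m ! := by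
  rw [factorial_eq_mul_doubleFactorial, doubleFactorial_two_mul, mul_assoc]

theorem sum_alternating_choose_div_sub_two_mul_of_odd {K : Type*} [Field K] [CharZero K]
    (m : ℕ) :
    ∑ a ∈ range (2 * m + 2), (-1) ^ a * ((2 * m + 1).choose a : K) / ((2 * m + 1 : ℕ) - 2 * a) =
      2 ^ (2 * m + 1) * (-2) ^ m * m ! / (2 * m + 1)‼ := by
  have hx : ∀ a ∈ range (2 * m + 2), ((2 * m + 1 : ℕ) : K) - 2 * a ≠ 0 := fun a _ h => by
    have : 2 * m + 1 = 2 * a := by exact_mod_cast sub_eq_zero.1 h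
    omega
  have hD : ((2 * m + 1)‼ : K) ≠ 0 := cast_ne_zero.2 (doubleFactorial_pos _).ne'
  have hsq : ((-1 : K) ^ m) ^ 2 = 1 := by rw [← pow_mul, pow_mul', neg_one_sq, one_pow]
  rw [sum_alternating_choose_div_sub_mul _ _ _ hx, prod_range_odd_sub_two_mul,
    factorial_two_mul_add_one, (odd_two_mul_add_one m).neg_one_pow, pow_succ (-1 : K) m,
    neg_pow (2 : K)]
  push_cast
  field_simp
  rw [hsq, mul_one]

theorem sum_alternating_choose_div_sub_two_mul_of_even {K : Type*} [Field K] [CharZero K]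
    {k : ℕ} (hk : Even k) :
    ∑ a ∈ range (k + 1), (-1) ^ a * (k.choose a : K) / (k - 2 * a) = 0 := by
  have hreflect : ∀ a ∈ range (k + 1),
      (-1) ^ (k - a) * (k.choose (k - a) : K) / (k - 2 * (k - a : ℕ)) =
        -((-1) ^ a * (k.choose a : K) / (k - 2 * a)) := fun a ha => by
    have hak : a ≤ k := Nat.lt_succ_iff.1 (mem_range.1 ha)
    have hsign : (-1 : K) ^ (k - a) = (-1) ^ a := neg_one_pow_congr (by simp [even_sub hak, hk])
    rw [hsign, choose_symm hak, cast_sub hak, ← div_neg]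
    ring_nf
  rw [← self_eq_neg, ← sum_neg_distrib, ← sum_congr rfl hreflect, ← sum_range_reflect]
  rfl

theorem stmt_0_general (k : ℕ) :
    (∑ a ∈ Finset.range (k + 1),
        if (k : ℤ) - 2 * a ≠ 0 then
          ((-1 : ℚ) ^ a * (k.choose a)) / ((k : ℚ) - 2 * a)
        else 0)
      = if Odd k then
          (2 : ℚ) ^ k * (-2 : ℚ) ^ ((k - 1) / 2) *
            (Nat.factorial ((k - 1) / 2) : ℚ) / (Nat.doubleFactorial k : ℚ)
        else 0 := by
  -- the excluded terms have denominator `0`, and `x / 0 = 0` in `ℚ`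
  have hjunk : ∀ a ∈ range (k + 1), (if (k : ℤ) - 2 * a ≠ 0 then
      (-1 : ℚ) ^ a * (k.choose a) / ((k : ℚ) - 2 * a) else 0) =
        (-1 : ℚ) ^ a * (k.choose a) / ((k : ℚ) - 2 * a) := fun a _ => by
    split_ifs with h
    · rfl
    · have : (k : ℚ) - 2 * a = 0 := by exact_mod_cast not_not.1 h
      rw [this, div_zero]
  rw [sum_congr rfl hjunk]
  split_ifs with hk
  · obtain ⟨m, rfl⟩ := hk
    rw [show (2 * m + 1 - 1) / 2 = m by omega]
    exact sum_alternating_choose_div_sub_two_mul_of_odd m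
  · exact sum_alternating_choose_div_sub_two_mul_of_even (not_odd_iff_even.1 hk)

theorem stmt_0 (k : ℕ) (hk : 1 ≤ k) :
    (∑ a ∈ Finset.range (k + 1),
        if (k : ℤ) - 2 * a ≠ 0 then
          ((-1 : ℚ) ^ a * (k.choose a)) / ((k : ℚ) - 2 * a)
        else 0)
      = if Odd k then
          (2 : ℚ) ^ k * (-2 : ℚ) ^ ((k - 1) / 2) *
            (Nat.factorial ((k - 1) / 2) : ℚ) / (Nat.doubleFactorial k : ℚ)
        else 0 :=
  stmt_0_general k
end

section
/- For all integers n ≥ 1 and r ≥ 0, the rational number ∑_{a=1}^{n+r} C_{n+r}(a) · (∑_{b=1}^{a} b^n) equals (−1)^n·B_n/(n+r) if r ≥ 1, and equals (−1)^n·B_n/n + (−1)^{n−1}·(n−1)!/(n+1) if r = 0. -/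
/-!
Faulhaber's formula writes `∑_{b ≤ a} b^n` as `a` times a polynomial in `a` of degree `n`, with
constant term `B'_n = (-1)^n B_n` and leading coefficient `1/(n+1)`; the factor `a` cancels the `a`
in the denominator of `C_N(a)`. What is left are the alternating sums `∑ (-1)^a binom(N,a) a^j`,
which are `(-1)^N` times the `N`-th forward difference of `x ↦ x^j` at `0`: they vanish for
`j < N` and equal `(-1)^N N!` for `j = N`. Hence only the constant term survives, together with
the leading term when `N = n`.
-/

open Finset

/-- The rational numbers `C_n(a) = ((-1)^(a-1) / (n·a)) · binom(n,a)`. -/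
def C (n a : ℕ) : ℚ := ((-1 : ℚ) ^ (a - 1) / ((n : ℚ) * (a : ℚ))) * (n.choose a : ℚ)

open fwdDiff

section AlternatingSums

variable {R : Type*} [CommRing R]

theorem sum_range_neg_one_pow_mul_choose_mul_eq_fwdDiff_iter (f : R → R) (N : ℕ) :
    ∑ k ∈ range (N + 1), (-1 : R) ^ k * N.choose k * f k = (-1) ^ N * (Δ_[1])^[N] f 0 := by
  rw [fwdDiff_iter_eq_sum_shift, mul_sum]
  refine sum_congr rfl fun k hk => ?_
  have hkN : k ≤ N := Nat.lt_succ_iff.mp (mem_range.mp hk)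
  have hsign : (-1 : R) ^ N * (-1) ^ (N - k) = (-1) ^ k := by
    rw [← pow_add, show N + (N - k) = k + 2 * (N - k) by omega, pow_add, pow_mul]
    simp
  rw [zsmul_eq_mul, zero_add, nsmul_one]
  push_cast
  rw [← hsign]
  ring

theorem sum_range_neg_one_pow_mul_choose_mul_pow_of_lt {N j : ℕ} (hj : j < N) :
    ∑ k ∈ range (N + 1), (-1 : R) ^ k * N.choose k * (k : R) ^ j = 0 := by
  rw [sum_range_neg_one_pow_mul_choose_mul_eq_fwdDiff_iter (· ^ j),
    fwdDiff_iter_pow_eq_zero_of_lt hj, Pi.zero_apply, mul_zero]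

theorem sum_range_neg_one_pow_mul_choose_mul_pow_self (N : ℕ) :
    ∑ k ∈ range (N + 1), (-1 : R) ^ k * N.choose k * (k : R) ^ N = (-1) ^ N * N.factorial := by
  rw [sum_range_neg_one_pow_mul_choose_mul_eq_fwdDiff_iter (· ^ N), fwdDiff_iter_eq_factorial]
  rfl

theorem sum_Icc_neg_one_pow_pred_mul_choose_mul_pow (N j : ℕ) :
    ∑ a ∈ Icc 1 N, (-1 : R) ^ (a - 1) * N.choose a * (a : R) ^ j
      = 0 ^ j - ∑ k ∈ range (N + 1), (-1 : R) ^ k * N.choose k * (k : R) ^ j := by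
  rw [range_eq_Ico, sum_eq_sum_Ico_succ_bot (Nat.succ_pos N), Nat.succ_eq_add_one, zero_add,
    Ico_add_one_right_eq_Icc, ← sub_sub, Nat.choose_zero_right]
  simp only [pow_zero, Nat.cast_zero, Nat.cast_one, mul_one, one_mul, sub_self, zero_sub,
    ← sum_neg_distrib]
  refine sum_congr rfl fun a ha => ?_
  obtain ⟨b, rfl⟩ := Nat.exists_eq_add_of_le' (mem_Icc.mp ha).1
  rw [Nat.add_sub_cancel, pow_succ]
  ring

theorem sum_Icc_neg_one_pow_pred_mul_choose_mul_pow_of_le {N j : ℕ} (hj : j ≤ N) :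
    ∑ a ∈ Icc 1 N, (-1 : R) ^ (a - 1) * N.choose a * (a : R) ^ j
      = 0 ^ j - if j = N then (-1) ^ N * (N.factorial : R) else 0 := by
  rw [sum_Icc_neg_one_pow_pred_mul_choose_mul_pow]
  split_ifs with h
  · rw [h, sum_range_neg_one_pow_mul_choose_mul_pow_self]
  · rw [sum_range_neg_one_pow_mul_choose_mul_pow_of_lt (lt_of_le_of_ne hj h)]

end AlternatingSums

theorem C_mul_sum_Icc_pow (N n : ℕ) {a : ℕ} (ha : 1 ≤ a) :
    C N a * ∑ b ∈ Icc 1 a, (b : ℚ) ^ n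
      = ∑ i ∈ range (n + 1), bernoulli' i * (n + 1).choose i / ((n + 1) * N)
          * ((-1) ^ (a - 1) * N.choose a * (a : ℚ) ^ (n - i)) := by
  rw [← Ico_add_one_right_eq_Icc, sum_Ico_pow, mul_sum]
  refine sum_congr rfl fun i hi => ?_
  rw [show n + 1 - i = n - i + 1 by have := mem_range.mp hi; omega, pow_succ, C]
  have : (a : ℚ) ≠ 0 := by positivity
  field_simp

theorem stmt_3 (n r : ℕ) (hn : 1 ≤ n) :
    (∑ a ∈ Finset.Icc 1 (n + r), C (n + r) a * (∑ b ∈ Finset.Icc 1 a, (b : ℚ) ^ n))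
      = if 1 ≤ r then
          (-1 : ℚ) ^ n * bernoulli n / ((n : ℚ) + (r : ℚ))
        else
          (-1 : ℚ) ^ n * bernoulli n / (n : ℚ)
            + (-1 : ℚ) ^ (n - 1) * (Nat.factorial (n - 1) : ℚ) / ((n : ℚ) + 1) := by
  rw [sum_congr rfl fun a ha => C_mul_sum_Icc_pow (n + r) n (mem_Icc.mp ha).1, sum_comm]
  simp_rw [← mul_sum]
  rw [sum_congr rfl fun i hi => by
    rw [sum_Icc_neg_one_pow_pred_mul_choose_mul_pow_of_le (show n - i ≤ n + r by omega)]]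
  simp only [mul_sub, sum_sub_distrib]
  rw [sum_eq_single_of_mem n (self_mem_range_succ n) fun i hi hne => by
    rw [zero_pow (by have := mem_range.mp hi; omega), mul_zero]]
  rw [Nat.sub_self, pow_zero, mul_one, Nat.choose_succ_self_right, bernoulli'_eq_bernoulli]
  by_cases hr : 1 ≤ r
  · rw [if_pos hr, sum_eq_zero fun i _ => by rw [if_neg (by omega), mul_zero], sub_zero]
    push_cast
    field_simp
  · obtain rfl : r = 0 := by omega
    rw [if_neg hr, sum_eq_single_of_mem 0 (by simp) fun i _ hi => by
      rw [if_neg (by omega), mul_zero], if_pos (by omega)]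
    obtain ⟨k, rfl⟩ := Nat.exists_eq_add_of_le' hn
    push_cast [Nat.factorial_succ, bernoulli'_zero, Nat.choose_zero_right]
    field_simp
    ring
end

section
/- For every integer n ≥ 1, the determinant of the n×n matrix with (i,j) entry B_{i+j}/(i+j)! (indices 1 ≤ i,j ≤ n) equals (−1)^{n(n−1)/2}·(2n+1)!! / (2^{n(n+1)} · (∏_{m=1}^{n} (2m+1)!!)^2 ). -/
/-!
With `⟨p, q⟩ = ∫₀¹ p q`, the Hilbert matrix `H = (1 / (a + b + 1))_{a, b ≤ n}` is the Gram matrix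
of the monomials, so a family `p₀, …, pₙ` with `deg pᵢ ≤ i` has Gram determinant
`(∏ᵢ coeffᵢ pᵢ)² · det H`.

For the shifted Legendre polynomials the Gram matrix is diagonal with entries `1 / (2k + 1)`
(Rodrigues' formula and integration by parts), which evaluates `det H`.

The scaled Bernoulli polynomials `bₖ = Bₖ / k!` satisfy `b'ₖ₊₁ = bₖ`, `bₖ(0) = Bₖ / k!`, and
`bₖ(1) = bₖ(0)` for `k ≠ 1`, so `∫₀¹ bₖ = 0` for `k ≥ 1`, and integrating by parts `j - 1` times
gives `∫₀¹ bᵢ bⱼ = (-1)^(j-1) B_{i+j} / (i+j)!` for `i, j ≥ 1`. Their Gram matrix is therefore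
`1 ⊕ M · diag((-1)^(j-1))`, and comparing with the Legendre evaluation of `det H` gives `det M`.
-/

open Finset Nat
open scoped Matrix

namespace Polynomial

theorem eval_iterate_derivative_eq_zero_of_pow_dvd {R : Type*} [CommRing R] {p : R[X]} {a : R}
    {k r : ℕ} (h : (X - C a) ^ k ∣ p) (hr : r < k) : (derivative^[r] p).eval a = 0 :=
  dvd_iff_isRoot.mp <| (dvd_pow_self _ (Nat.sub_ne_zero_of_lt hr)).trans
    (pow_sub_dvd_iterate_derivative_of_pow_dvd r h)

theorem iterate_derivative_eq_C_of_natDegree_le {R : Type*} [Semiring R] {p : R[X]} {k : ℕ}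
    (hp : p.natDegree ≤ k) : derivative^[k] p = C (k ! * p.coeff k) := by
  rw [eq_C_of_natDegree_le_zero ((natDegree_iterate_derivative p k).trans (by omega)),
    coeff_iterate_derivative, zero_add, descFactorial_self, nsmul_eq_mul]

section UnitIntegral

variable {K : Type*} [Field K]

/-- The integral `∫₀¹ p(x) dx`, defined on coefficients so that it makes sense over any field of
characteristic zero. -/
noncomputable def unitIntegral : K[X] →ₗ[K] K :=
  lsum fun k => ((k + 1 : K)⁻¹) • LinearMap.id

@[simp]
theorem unitIntegral_monomial (k : ℕ) (a : K) : unitIntegral (monomial k a) = a / (k + 1) := by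
  simp [unitIntegral, sum_monomial_index, div_eq_inv_mul]

theorem unitIntegral_X_pow (k : ℕ) : unitIntegral (X ^ k : K[X]) = (k + 1 : K)⁻¹ := by
  simp [← monomial_one_right_eq_X_pow]

@[simp]
theorem unitIntegral_one : unitIntegral (1 : K[X]) = 1 := by
  simpa using unitIntegral_X_pow (K := K) 0

theorem unitIntegral_derivative [CharZero K] (p : K[X]) :
    unitIntegral (derivative p) = p.eval 1 - p.eval 0 := by
  induction p using Polynomial.induction_on' with
  | add p q hp hq => simp only [map_add, hp, hq, eval_add]; ring
  | monomial k a =>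
    cases k with
    | zero => simp
    | succ m =>
      rw [derivative_monomial, unitIntegral_monomial]
      simp only [Nat.add_sub_cancel, eval_monomial, one_pow, ne_eq, Nat.succ_ne_zero,
        not_false_eq_true, zero_pow]
      push_cast
      field_simp
      ring

theorem unitIntegral_derivative_mul [CharZero K] (p q : K[X]) :
    unitIntegral (derivative p * q)
      = (p * q).eval 1 - (p * q).eval 0 - unitIntegral (p * derivative q) := by
  rw [← unitIntegral_derivative, derivative_mul, map_add]
  ring

theorem unitIntegral_iterate_derivative_mul [CharZero K] {s : ℕ} {p : K[X]}
    (h0 : ∀ r < s, (derivative^[r] p).eval 0 = 0) (h1 : ∀ r < s, (derivative^[r] p).eval 1 = 0)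
    (q : K[X]) :
    unitIntegral (derivative^[s] p * q) = (-1) ^ s * unitIntegral (p * derivative^[s] q) := by
  induction s generalizing p with
  | zero => simp
  | succ s ih =>
    have h0' : ∀ r < s, (derivative^[r] (derivative p)).eval 0 = 0 := fun r hr =>
      h0 (r + 1) (by omega)
    have h1' : ∀ r < s, (derivative^[r] (derivative p)).eval 1 = 0 := fun r hr =>
      h1 (r + 1) (by omega)
    have hp0 : p.eval 0 = 0 := h0 0 s.succ_pos
    have hp1 : p.eval 1 = 0 := h1 0 s.succ_pos
    rw [Function.iterate_succ_apply, ih h0' h1', unitIntegral_derivative_mul, eval_mul, eval_mul,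
      hp0, hp1, ← Function.iterate_succ_apply' derivative]
    ring

theorem unitIntegral_X_pow_mul_one_sub_X_pow [CharZero K] (a b : ℕ) :
    unitIntegral (X ^ a * (1 - X) ^ b : K[X]) = a ! * b ! / (a + b + 1) ! := by
  induction b generalizing a with
  | zero =>
    simp only [pow_zero, mul_one, unitIntegral_X_pow, Nat.add_zero, factorial_zero, factorial_succ]
    push_cast
    have : (a ! : K) ≠ 0 := Nat.cast_ne_zero.2 a.factorial_ne_zero
    field_simp
  | succ b ih =>
    have hX : (X ^ a : K[X]) = (a + 1 : K)⁻¹ • derivative (X ^ (a + 1)) := by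
      rw [derivative_X_pow, smul_eq_C_mul, ← mul_assoc, ← C_mul, Nat.add_sub_cancel]
      push_cast
      simp [Nat.cast_add_one_ne_zero]
    have hd : derivative ((1 - X : K[X]) ^ (b + 1)) = -((b + 1 : K) • (1 - X) ^ b) := by
      rw [derivative_pow, smul_eq_C_mul]
      simp only [derivative_sub, derivative_one, derivative_X, Nat.add_sub_cancel]
      push_cast
      ring
    rw [hX, smul_mul_assoc, map_smul, unitIntegral_derivative_mul, hd, mul_neg, mul_smul_comm,
      map_neg, map_smul, ih, show a + 1 + b + 1 = a + (b + 1) + 1 by omega]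
    simp only [eval_mul, eval_pow, eval_X, eval_sub, eval_one, sub_self,
      zero_pow (Nat.succ_ne_zero _), mul_zero, zero_mul, sub_zero, zero_sub, neg_neg, smul_eq_mul,
      factorial_succ]
    push_cast
    field_simp

end UnitIntegral

section GramMatrix

variable {K : Type*} [Field K] {n : ℕ}

noncomputable def hilbertMatrix (n : ℕ) : Matrix (Fin n) (Fin n) K :=
  Matrix.of fun a b => ((a : K) + b + 1)⁻¹

noncomputable def coeffMatrix (p : Fin n → K[X]) : Matrix (Fin n) (Fin n) K :=
  Matrix.of fun i a => (p i).coeff a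

noncomputable def gramMatrix (p : Fin n → K[X]) : Matrix (Fin n) (Fin n) K :=
  Matrix.of fun i j => unitIntegral (p i * p j)

theorem unitIntegral_mul_eq_sum {p q : K[X]} (hp : p.natDegree < n) (hq : q.natDegree < n) :
    unitIntegral (p * q)
      = ∑ a : Fin n, ∑ b : Fin n, p.coeff a * q.coeff b * ((a : K) + b + 1)⁻¹ := by
  conv_lhs => rw [as_sum_range' p n hp, as_sum_range' q n hq]
  simp only [sum_mul_sum, map_sum, monomial_mul_monomial, unitIntegral_monomial,
    ← Fin.sum_univ_eq_sum_range]
  push_cast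
  simp only [div_eq_mul_inv]

theorem coeffMatrix_mul_hilbertMatrix_mul_transpose {p : Fin n → K[X]}
    (hp : ∀ i, (p i).natDegree < n) :
    coeffMatrix p * hilbertMatrix n * (coeffMatrix p)ᵀ = gramMatrix p := by
  ext i j
  rw [gramMatrix, Matrix.of_apply, unitIntegral_mul_eq_sum (hp i) (hp j), sum_comm]
  simp only [Matrix.mul_apply, Matrix.transpose_apply, coeffMatrix, hilbertMatrix, Matrix.of_apply,
    sum_mul]
  refine sum_congr rfl fun b _ => sum_congr rfl fun a _ => ?_
  ring

theorem det_coeffMatrix {p : Fin n → K[X]} (hp : ∀ i, (p i).natDegree ≤ i) :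
    (coeffMatrix p).det = ∏ i, (p i).coeff i :=
  Matrix.det_of_isLowerTriangular _ fun i _ hia =>
    coeff_eq_zero_of_natDegree_lt ((hp i).trans_lt (Fin.lt_def.mp hia))

theorem det_gramMatrix {p : Fin n → K[X]} (hp : ∀ i, (p i).natDegree ≤ i) :
    (gramMatrix p).det = (∏ i, (p i).coeff i) ^ 2 * (hilbertMatrix n).det := by
  rw [← coeffMatrix_mul_hilbertMatrix_mul_transpose fun i => (hp i).trans_lt i.isLt,
    Matrix.det_mul, Matrix.det_mul, Matrix.det_transpose, det_coeffMatrix hp]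
  ring

end GramMatrix

section Legendre

noncomputable def legendre (K : Type*) [Ring K] (k : ℕ) : K[X] :=
  (shiftedLegendre k).map (Int.castRingHom K)

variable {K : Type*} [Field K]

theorem factorial_mul_legendre (k : ℕ) :
    (k ! : K[X]) * legendre K k = derivative^[k] (X ^ k * (1 - X) ^ k) := by
  have h := congrArg (map (Int.castRingHom K)) (factorial_mul_shiftedLegendre_eq k)
  simpa [legendre, ← iterate_derivative_map] using h

theorem natDegree_legendre_le (k : ℕ) : (legendre K k).natDegree ≤ k :=
  natDegree_map_le.trans (natDegree_shiftedLegendre k).le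

theorem coeff_legendre_self (k : ℕ) : (legendre K k).coeff k = (-1) ^ k * (2 * k).choose k := by
  simp [legendre, coeff_map, coeff_shiftedLegendre, two_mul]

theorem unitIntegral_legendre_mul [CharZero K] (k : ℕ) (q : K[X]) :
    unitIntegral (legendre K k * q)
      = (-1) ^ k / k ! * unitIntegral (X ^ k * (1 - X) ^ k * derivative^[k] q) := by
  have hk : (k ! : K) ≠ 0 := Nat.cast_ne_zero.2 k.factorial_ne_zero
  have h0 : (X - C 0) ^ k ∣ (X ^ k * (1 - X) ^ k : K[X]) := by simp
  have h1 : (X - C 1) ^ k ∣ (X ^ k * (1 - X) ^ k : K[X]) :=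
    (pow_dvd_pow_of_dvd ⟨-1, by simp⟩ k).mul_left _
  have h := unitIntegral_iterate_derivative_mul
    (fun r hr => eval_iterate_derivative_eq_zero_of_pow_dvd h0 hr)
    (fun r hr => eval_iterate_derivative_eq_zero_of_pow_dvd h1 hr) q
  rw [← factorial_mul_legendre, mul_assoc, ← C_eq_natCast, ← smul_eq_C_mul, map_smul,
    smul_eq_mul] at h
  rw [div_mul_eq_mul_div, eq_div_iff hk, mul_comm, h]

theorem unitIntegral_legendre_mul_eq_zero [CharZero K] {k : ℕ} {q : K[X]}
    (hq : q.natDegree < k) : unitIntegral (legendre K k * q) = 0 := by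
  rw [unitIntegral_legendre_mul, iterate_derivative_eq_zero hq, mul_zero, map_zero, mul_zero]

theorem unitIntegral_legendre_mul_self [CharZero K] (k : ℕ) :
    unitIntegral (legendre K k * legendre K k) = (2 * k + 1 : K)⁻¹ := by
  have hk : (k ! : K) ≠ 0 := Nat.cast_ne_zero.2 k.factorial_ne_zero
  have hchoose : ((2 * k).choose k * k ! * k ! : K) = (2 * k)! := by
    exact_mod_cast two_mul k ▸ Nat.add_choose_mul_factorial_mul_factorial k k
  rw [unitIntegral_legendre_mul, iterate_derivative_eq_C_of_natDegree_le (natDegree_legendre_le k),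
    coeff_legendre_self, mul_comm _ (C _), ← smul_eq_C_mul, map_smul,
    unitIntegral_X_pow_mul_one_sub_X_pow, smul_eq_mul, ← two_mul, factorial_succ]
  push_cast
  rw [← hchoose]
  have hc : ((2 * k).choose k : K) ≠ 0 := Nat.cast_ne_zero.2 (Nat.choose_pos (by omega)).ne'
  field_simp
  rw [← pow_mul, pow_mul', neg_one_sq, one_pow]

theorem gramMatrix_legendre [CharZero K] (n : ℕ) :
    gramMatrix (fun i : Fin n => legendre K i)
      = Matrix.diagonal fun i : Fin n => (2 * (i : ℕ) + 1 : K)⁻¹ := by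
  ext i j
  rcases lt_trichotomy i j with h | rfl | h
  · rw [Matrix.diagonal_apply_ne _ h.ne, gramMatrix, Matrix.of_apply, mul_comm]
    exact unitIntegral_legendre_mul_eq_zero ((natDegree_legendre_le _).trans_lt h)
  · rw [Matrix.diagonal_apply_eq, gramMatrix, Matrix.of_apply]
    exact unitIntegral_legendre_mul_self _
  · rw [Matrix.diagonal_apply_ne _ h.ne', gramMatrix, Matrix.of_apply]
    exact unitIntegral_legendre_mul_eq_zero ((natDegree_legendre_le _).trans_lt h)

theorem det_hilbertMatrix [CharZero K] (n : ℕ) :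
    (hilbertMatrix n : Matrix (Fin n) (Fin n) K).det
      = ∏ i : Fin n, ((2 * (i : ℕ) + 1) * ((2 * (i : ℕ)).choose i) ^ 2 : K)⁻¹ := by
  have h := det_gramMatrix (K := K) (p := fun i : Fin n => legendre K i)
    fun i => natDegree_legendre_le _
  have hsign : (∏ i : Fin n, (-1 : K) ^ (i : ℕ)) ^ 2 = 1 := by
    simp [← prod_pow, ← pow_mul]
  have hchoose : ∏ i : Fin n, ((2 * (i : ℕ)).choose i : K) ≠ 0 :=
    prod_ne_zero_iff.2 fun i _ => Nat.cast_ne_zero.2 (Nat.choose_pos (by omega)).ne'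
  simp only [gramMatrix_legendre, Matrix.det_diagonal, coeff_legendre_self, prod_mul_distrib,
    mul_pow, hsign, one_mul] at h
  rw [prod_inv_distrib, prod_mul_distrib, prod_pow, mul_inv, ← prod_inv_distrib, h]
  field_simp

end Legendre

section ScaledBernoulli

noncomputable def scaledBernoulli (k : ℕ) : ℚ[X] :=
  (k ! : ℚ)⁻¹ • bernoulli k

@[simp]
theorem scaledBernoulli_zero : scaledBernoulli 0 = 1 := by
  simp [scaledBernoulli]

theorem derivative_scaledBernoulli_succ (k : ℕ) :
    derivative (scaledBernoulli (k + 1)) = scaledBernoulli k := by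
  have hC : ((k : ℚ[X]) + 1) = C ((k : ℚ) + 1) := by simp
  rw [scaledBernoulli, scaledBernoulli, derivative_smul, derivative_bernoulli_add_one, hC,
    ← smul_eq_C_mul, smul_smul, factorial_succ]
  congr 1
  push_cast
  field_simp

theorem eval_zero_scaledBernoulli (k : ℕ) :
    (scaledBernoulli k).eval 0 = _root_.bernoulli k / k ! := by
  simp [scaledBernoulli, div_eq_inv_mul]

theorem eval_one_scaledBernoulli {k : ℕ} (hk : k ≠ 1) :
    (scaledBernoulli k).eval 1 = (scaledBernoulli k).eval 0 := by
  simp [scaledBernoulli, bernoulli_eq_bernoulli'_of_ne_one hk]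

theorem natDegree_scaledBernoulli_le (k : ℕ) : (scaledBernoulli k).natDegree ≤ k :=
  (natDegree_smul_le _ _).trans <| natDegree_le_iff_coeff_eq_zero.2 fun i hi => by
    rw [coeff_bernoulli, if_neg (by exact_mod_cast hi.not_ge)]

theorem coeff_scaledBernoulli_self (k : ℕ) : (scaledBernoulli k).coeff k = (k ! : ℚ)⁻¹ := by
  simp [scaledBernoulli, coeff_bernoulli]

theorem unitIntegral_scaledBernoulli {k : ℕ} (hk : k ≠ 0) :
    unitIntegral (scaledBernoulli k) = 0 := by
  rw [← derivative_scaledBernoulli_succ, unitIntegral_derivative,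
    eval_one_scaledBernoulli (by omega), sub_self]

theorem unitIntegral_scaledBernoulli_mul {i : ℕ} (hi : i ≠ 0) (j : ℕ) :
    unitIntegral (scaledBernoulli i * scaledBernoulli (j + 1))
      = (-1) ^ j * (_root_.bernoulli (i + j + 1) / (i + j + 1)!) := by
  induction j generalizing i with
  | zero =>
    have h1 : scaledBernoulli 1 = X - C 2⁻¹ := by simp [scaledBernoulli]
    rw [← derivative_scaledBernoulli_succ, unitIntegral_derivative_mul,
      derivative_scaledBernoulli_succ, scaledBernoulli_zero, mul_one,
      unitIntegral_scaledBernoulli (by omega), eval_mul, eval_mul,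
      eval_one_scaledBernoulli (by omega), eval_zero_scaledBernoulli, h1]
    simp only [eval_sub, eval_X, eval_C]
    ring
  | succ j ih =>
    rw [← derivative_scaledBernoulli_succ, unitIntegral_derivative_mul,
      derivative_scaledBernoulli_succ, ih (by omega), eval_mul, eval_mul,
      eval_one_scaledBernoulli (by omega), eval_one_scaledBernoulli (by omega),
      show i + 1 + j + 1 = i + (j + 1) + 1 by omega]
    ring

end ScaledBernoulli

end Polynomial

theorem Matrix.det_succ_of_row_zero_eq_zero {R : Type*} [CommRing R] {n : ℕ}
    (A : Matrix (Fin (n + 1)) (Fin (n + 1)) R) (h : ∀ j ≠ 0, A 0 j = 0) :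
    A.det = A 0 0 * (A.submatrix Fin.succ Fin.succ).det := by
  rw [Matrix.det_succ_row_zero,
    sum_eq_single 0 (fun j _ hj => by rw [h j hj, mul_zero, zero_mul]) (by simp)]
  simp

noncomputable def bernoulliMatrix (n : ℕ) : Matrix (Fin n) (Fin n) ℚ :=
  Matrix.of fun i j : Fin n =>
    bernoulli (((i : ℕ) + 1) + ((j : ℕ) + 1)) /
      (Nat.factorial (((i : ℕ) + 1) + ((j : ℕ) + 1)) : ℚ)

open Polynomial in
theorem gramMatrix_scaledBernoulli_submatrix_succ (n : ℕ) :
    (gramMatrix fun i : Fin (n + 1) => scaledBernoulli i).submatrix Fin.succ Fin.succ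
      = bernoulliMatrix n * Matrix.diagonal fun j : Fin n => (-1) ^ (j : ℕ) := by
  ext i j
  rw [Matrix.submatrix_apply, gramMatrix, Matrix.of_apply, Fin.val_succ, Fin.val_succ,
    unitIntegral_scaledBernoulli_mul (by omega), Matrix.mul_diagonal, bernoulliMatrix,
    Matrix.of_apply, show (i : ℕ) + 1 + j + 1 = i + 1 + (j + 1) by omega, mul_comm]

open Polynomial in
theorem det_bernoulliMatrix (n : ℕ) :
    (bernoulliMatrix n).det = (-1) ^ (n * (n - 1) / 2)
      * ∏ k ∈ range (n + 1), ((k ! : ℚ) ^ 2 * ((2 * k + 1) * ((2 * k).choose k) ^ 2))⁻¹ := by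
  set G := gramMatrix fun i : Fin (n + 1) => scaledBernoulli i
  have hrow : ∀ j ≠ 0, G 0 j = 0 := fun j hj => by
    simp only [G, gramMatrix, Matrix.of_apply, Fin.val_zero, scaledBernoulli_zero, one_mul,
      unitIntegral_scaledBernoulli (Fin.val_ne_zero_iff.mpr hj)]
  have h00 : G 0 0 = 1 := by simp [G, gramMatrix]
  have hG := Matrix.det_succ_of_row_zero_eq_zero G hrow
  rw [h00, one_mul, gramMatrix_scaledBernoulli_submatrix_succ, Matrix.det_mul,
    Matrix.det_diagonal, Finset.prod_pow_eq_pow_sum, Fin.sum_univ_eq_sum_range (fun j => j),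
    sum_range_id, det_gramMatrix fun i => natDegree_scaledBernoulli_le i, det_hilbertMatrix] at hG
  simp only [coeff_scaledBernoulli_self] at hG
  rw [prod_range]
  simp only [mul_inv, prod_mul_distrib, ← inv_pow, prod_pow] at hG ⊢
  rw [hG, mul_left_comm, ← pow_add, ← two_mul, pow_mul, neg_one_sq, one_pow, mul_one]

theorem factorial_mul_choose_two_mul_succ (n : ℕ) :
    (n + 1)! * (2 * (n + 1)).choose (n + 1) = 2 ^ (n + 1) * (2 * n + 1)‼ := by
  refine Nat.eq_of_mul_eq_mul_left (n + 1).factorial_pos ?_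
  have h := Nat.add_choose_mul_factorial_mul_factorial (n + 1) (n + 1)
  rw [← two_mul, show 2 * (n + 1) = 2 * n + 1 + 1 by ring,
    factorial_eq_mul_doubleFactorial (2 * n + 1), show 2 * n + 1 + 1 = 2 * (n + 1) by ring,
    doubleFactorial_two_mul] at h
  linear_combination h

theorem prod_range_inv_factorial_sq_mul_choose_sq (n : ℕ) :
    ∏ k ∈ range (n + 1), ((k ! : ℚ) ^ 2 * ((2 * k + 1) * ((2 * k).choose k) ^ 2))⁻¹
      = (2 * n + 1)‼ / (2 ^ (n * (n + 1)) * (∏ m ∈ Icc 1 n, ((2 * m + 1)‼ : ℚ)) ^ 2) := by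
  induction n with
  | zero => simp
  | succ n ih =>
    have hc : ((n + 1)! * (2 * (n + 1)).choose (n + 1) : ℚ) = 2 ^ (n + 1) * (2 * n + 1)‼ := by
      exact_mod_cast factorial_mul_choose_two_mul_succ n
    have hd : ((2 * (n + 1) + 1)‼ : ℚ) = (2 * n + 3) * (2 * n + 1)‼ := by
      rw [show 2 * (n + 1) + 1 = 2 * n + 1 + 2 by ring, doubleFactorial_add_two]
      push_cast
      ring
    have hpos : ((2 * n + 1)‼ : ℚ) ≠ 0 := Nat.cast_ne_zero.2 (doubleFactorial_pos _).ne'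
    have hP : ∏ m ∈ Icc 1 n, ((2 * m + 1)‼ : ℚ) ≠ 0 :=
      prod_ne_zero_iff.2 fun m _ => Nat.cast_ne_zero.2 (doubleFactorial_pos _).ne'
    rw [prod_range_succ, ih, prod_Icc_succ_top (by omega), hd,
      show (n + 1) * (n + 1 + 1) = n * (n + 1) + 2 * (n + 1) by ring, pow_add, pow_mul]
    rw [show ((n + 1)! : ℚ) ^ 2 * ((2 * ((n + 1 : ℕ) : ℚ) + 1) * ((2 * (n + 1)).choose (n + 1)) ^ 2)
        = ((n + 1)! * (2 * (n + 1)).choose (n + 1) : ℚ) ^ 2 * (2 * n + 3) by push_cast; ring, hc]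
    have h3 : (2 * n + 3 : ℚ) ≠ 0 := by positivity
    field_simp
    ring

theorem stmt_4_general (n : ℕ) :
    (Matrix.of fun i j : Fin n =>
        bernoulli (((i : ℕ) + 1) + ((j : ℕ) + 1)) /
          (Nat.factorial (((i : ℕ) + 1) + ((j : ℕ) + 1)) : ℚ)).det
      = (-1 : ℚ) ^ (n * (n - 1) / 2) * (Nat.doubleFactorial (2 * n + 1) : ℚ) /
          ((2 : ℚ) ^ (n * (n + 1)) *
            (∏ m ∈ Finset.Icc 1 n, (Nat.doubleFactorial (2 * m + 1) : ℚ)) ^ 2) := by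
  have h := det_bernoulliMatrix n
  rw [prod_range_inv_factorial_sq_mul_choose_sq, ← mul_div_assoc] at h
  exact h

theorem stmt_4 (n : ℕ) (hn : 1 ≤ n) :
    (Matrix.of fun i j : Fin n =>
        bernoulli (((i : ℕ) + 1) + ((j : ℕ) + 1)) /
          (Nat.factorial (((i : ℕ) + 1) + ((j : ℕ) + 1)) : ℚ)).det
      = (-1 : ℚ) ^ (n * (n - 1) / 2) * (Nat.doubleFactorial (2 * n + 1) : ℚ) /
          ((2 : ℚ) ^ (n * (n + 1)) *
            (∏ m ∈ Finset.Icc 1 n, (Nat.doubleFactorial (2 * m + 1) : ℚ)) ^ 2) :=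
  stmt_4_general n
end

section
/- For every integer n ≥ 1: the determinant of the n×n matrix Δ_n with (a,b) entry B_{2a+2b−2}/(2a+2b−2)! (indices 1 ≤ a,b ≤ n) equals 1/(2^{2n²} · ∏_{m=1}^{2n−1} (2m+1)!!), and the determinant of the n×n matrix Θ_n with (a,b) entry B_{2a+2b}/(2a+2b)! equals (−1)^n/(2^{2n(n+1)} · ∏_{m=1}^{2n} (2m+1)!!). -/
/-!
Let `N_n(x) = ∑ₖ C(n,k) (2n-k)!/(2n)! xᵏ` and `D_n(x) = N_n(-x)` be the numerator and denominator
of the `[n/n]` Padé approximant of `eˣ`. For `k ≤ 2n`, `k! [xᵏ] N_n` is a constant times the falling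
factorial `(2n-k)(2n-k-1)⋯(n-k+1)`, a polynomial of degree `n` in `k`, and the coefficients of
`D_n(x) eˣ` are its iterated forward differences. Hence `N_n(x) - D_n(x) eˣ = ε_n x²ⁿ⁺¹ + O(x²ⁿ⁺²)`
with `ε_n = (-1)ⁿ⁺¹ n!² / ((2n)! (2n+1)!)`.

Since `B(x) (eˣ - 1) = x` for `B(x) = ∑ Bₖ xᵏ/k!`, this gives
`B(x) (N_n(x) - D_n(x)) = x D_n(x) + ε_n x²ⁿ⁺¹ + O(x²ⁿ⁺²)`. On the left `B` multiplies an odd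
polynomial, so its odd coefficients are convolutions of `B₂ₖ/(2k)!` with the odd coefficients of
`N_n`. Multiplying the Hankel matrix `(B_{2(a+b+t)}/(2(a+b+t))!)`, `t = 1, 2`, by the unitriangular
matrix whose `j`-th column holds the odd coefficients of `2 N_{2j+t}` therefore gives a lower
triangular matrix with diagonal `ε_{2j+t}`; the closed forms follow from
`(2k)! (2k+1)! = 4ᵏ k!² (2k-1)!! (2k+1)!!`.
-/

open Finset Nat

theorem sum_range_two_mul {M : Type*} [AddCommMonoid M] (f : ℕ → M) (m : ℕ) :
    ∑ k ∈ range (2 * m), f k =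
      ∑ i ∈ range m, f (2 * i) + ∑ i ∈ range m, f (2 * i + 1) := by
  induction m with
  | zero => simp
  | succ m ih =>
    rw [show 2 * (m + 1) = 2 * m + 1 + 1 by ring, sum_range_succ, sum_range_succ, ih,
      sum_range_succ, sum_range_succ]
    abel

theorem choose_mul_factorial_mul_factorial_two_mul_sub {n k : ℕ} (hk : k ≤ 2 * n) :
    n.choose k * k ! * (2 * n - k)! = n ! * (2 * n - k).descFactorial n := by
  rcases le_or_gt k n with hkn | hnk
  · rw [mul_comm (n.choose k), ← descFactorial_eq_factorial_mul_choose,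
      ← factorial_mul_descFactorial (by omega : n ≤ 2 * n - k),
      ← factorial_mul_descFactorial hkn, show 2 * n - k - n = n - k by omega]
    ring
  · rw [choose_eq_zero_of_lt hnk, descFactorial_eq_zero_iff_lt.mpr (by omega)]
    simp

section FallingFactorial

open Polynomial fwdDiff

variable {R : Type*} [CommRing R]

theorem fwdDiff_descPochhammer_eval_succ (d : ℕ) :
    Δ_[1] (descPochhammer R (d + 1)).eval = ((d + 1 : ℕ) : R) • (descPochhammer R d).eval := by
  ext x
  have shift : (descPochhammer R (d + 1)).eval (x + 1) = (x + 1) * (descPochhammer R d).eval x := by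
    simp [descPochhammer_succ_left]
  rw [fwdDiff, shift, descPochhammer_succ_eval, Pi.smul_apply, smul_eq_mul]
  push_cast
  ring

theorem fwdDiff_iter_descPochhammer_eval (d r : ℕ) :
    (Δ_[1])^[r] (descPochhammer R d).eval =
      (d.descFactorial r : R) • (descPochhammer R (d - r)).eval := by
  induction r generalizing d with
  | zero => simp
  | succ r ih =>
    rw [Function.iterate_succ_apply]
    cases d with
    | zero =>
      simp only [descPochhammer_zero, eval_one, fwdDiff_const, zero_descFactorial_succ, cast_zero,
        zero_smul]
      exact Function.iterate_fixed (fwdDiff_const (1 : R) (0 : R)) r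
    | succ d =>
      rw [fwdDiff_descPochhammer_eval_succ, fwdDiff_iter_const_smul, ih, smul_smul,
        succ_descFactorial_succ, Nat.succ_sub_succ]
      push_cast
      rfl

theorem sum_range_choose_mul_descPochhammer_eval (d r : ℕ) (y : R) :
    ∑ k ∈ range (r + 1), (-1) ^ (r - k) * (r.choose k : R) * (descPochhammer R d).eval (y + k) =
      d.descFactorial r * (descPochhammer R (d - r)).eval y := by
  have := congrFun (fwdDiff_iter_descPochhammer_eval (R := R) d r) y
  rw [fwdDiff_iter_eq_sum_shift] at this
  simpa using this

theorem descPochhammer_eval_neg_one (n : ℕ) :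
    (descPochhammer R n).eval (-1) = (-1) ^ n * n ! := by
  have h := ascPochhammer_eval_neg_eq_descPochhammer R (-1 : R) n
  rw [neg_neg, ascPochhammer_eval_one] at h
  rw [h, ← mul_assoc, ← mul_pow, neg_one_mul, neg_neg, one_pow, one_mul]

theorem descFactorial_mul_descPochhammer_eval_two_mul_sub {n s : ℕ} (hs : s ≤ 2 * n) :
    (n.descFactorial s : R) * (descPochhammer R (n - s)).eval (2 * n - s : R) =
      (descPochhammer R n).eval (2 * n - s : R) := by
  rcases le_or_gt s n with hsn | hns
  · have h := congrArg (eval (2 * n - s : R)) (descPochhammer_mul R (n - s) s)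
    rw [eval_mul, eval_comp, Nat.sub_add_cancel hsn, eval_sub, eval_X, eval_natCast,
      Nat.cast_sub hsn, show (2 * n - s - (n - s) : R) = n by ring,
      descPochhammer_eval_eq_descFactorial] at h
    rw [← h, mul_comm]
  · have : (2 * n - s : R) = ((2 * n - s : ℕ) : R) := by push_cast [hs]; ring
    rw [descFactorial_eq_zero_iff_lt.mpr hns, this,
      descPochhammer_eval_coe_nat_of_lt (show 2 * n - s < n by omega)]
    simp

end FallingFactorial

namespace PowerSeries

section

variable {R : Type*} [CommSemiring R]

theorem coeff_mul_of_X_pow_dvd {f g : R⟦X⟧} {N k : ℕ} (hg : X ^ N ∣ g) (hk : k < N) :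
    coeff k (f * g) = 0 := by
  obtain ⟨q, rfl⟩ := hg
  rw [mul_left_comm, coeff_X_pow_mul', if_neg (not_le.mpr hk)]

theorem coeff_mul_of_X_pow_dvd_self {f g : R⟦X⟧} {N : ℕ} (hg : X ^ N ∣ g) :
    coeff N (f * g) = constantCoeff f * coeff N g := by
  obtain ⟨q, rfl⟩ := hg
  rw [mul_left_comm, coeff_X_pow_mul', coeff_X_pow_mul', if_pos le_rfl, if_pos le_rfl, Nat.sub_self,
    coeff_zero_eq_constantCoeff, map_mul]

end

theorem factorial_mul_coeff_exp_mul (f : ℚ⟦X⟧) (s : ℕ) :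
    (s ! : ℚ) * coeff s (exp ℚ * f) =
      ∑ k ∈ range (s + 1), s.choose k * ((s - k)! * coeff (s - k) f) := by
  rw [coeff_mul, Nat.sum_antidiagonal_eq_sum_range_succ (fun i j => coeff i (exp ℚ) * coeff j f),
    mul_sum]
  refine sum_congr rfl fun k hk => ?_
  have := choose_mul_factorial_mul_factorial (mem_range_succ_iff.mp hk)
  rw [coeff_exp, Algebra.algebraMap_self, RingHom.id_apply, ← this]
  push_cast
  field_simp

noncomputable section

def padeCoeff (n k : ℕ) : ℚ := n.choose k * (2 * n - k)! / (2 * n)!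

def padeNum (n : ℕ) : ℚ⟦X⟧ := mk (padeCoeff n)

def padeDen (n : ℕ) : ℚ⟦X⟧ := rescale (-1) (padeNum n)

def padeRemainder (n : ℕ) : ℚ⟦X⟧ := padeNum n - exp ℚ * padeDen n

def padeError (n : ℕ) : ℚ := (-1) ^ (n + 1) * n ! ^ 2 / ((2 * n)! * (2 * n + 1)!)

theorem padeCoeff_of_lt {n k : ℕ} (h : n < k) : padeCoeff n k = 0 := by
  simp [padeCoeff, choose_eq_zero_of_lt h]

theorem padeCoeff_one {n : ℕ} (hn : 0 < n) : padeCoeff n 1 = 1 / 2 := by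
  obtain ⟨m, rfl⟩ : ∃ m, n = m + 1 := ⟨n - 1, by omega⟩
  rw [padeCoeff, show 2 * (m + 1) - 1 = 2 * m + 1 by omega,
    show 2 * (m + 1) = 2 * m + 1 + 1 by omega, factorial_succ (2 * m + 1)]
  field_simp
  push_cast [choose_one_right]
  ring

theorem coeff_padeDen (n k : ℕ) : coeff k (padeDen n) = (-1) ^ k * padeCoeff n k := by
  rw [padeDen, coeff_rescale, padeNum, coeff_mk]

theorem factorial_mul_padeCoeff {n k : ℕ} (hk : k ≤ 2 * n) :
    (k ! : ℚ) * padeCoeff n k =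
      n ! / (2 * n)! * (descPochhammer ℚ n).eval (2 * n - k : ℚ) := by
  have key := choose_mul_factorial_mul_factorial_two_mul_sub hk
  have hcast : (2 * n - k : ℚ) = ((2 * n - k : ℕ) : ℚ) := by push_cast [hk]; ring
  rw [hcast, descPochhammer_eval_eq_descFactorial, padeCoeff]
  field_simp
  exact_mod_cast by rw [← key]; ring

theorem choose_mul_factorial_mul_coeff_padeDen {n s k : ℕ} (hk : k ≤ s) (hs : s - k ≤ 2 * n) :
    s.choose k * ((s - k)! * coeff (s - k) (padeDen n)) =
      n ! / (2 * n)! *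
        ((-1) ^ (s - k) * s.choose k * (descPochhammer ℚ n).eval ((2 * n - s : ℚ) + k)) := by
  rw [coeff_padeDen, mul_left_comm ((s - k)! : ℚ), factorial_mul_padeCoeff hs, Nat.cast_sub hk,
    show (2 * n - (s - k) : ℚ) = (2 * n - s) + k by ring]
  ring

theorem coeff_exp_mul_padeDen {n s : ℕ} (hs : s ≤ 2 * n) :
    coeff s (exp ℚ * padeDen n) = padeCoeff n s := by
  apply mul_left_cancel₀ (cast_ne_zero.mpr (factorial_ne_zero s) : (s ! : ℚ) ≠ 0)
  rw [factorial_mul_coeff_exp_mul, sum_congr rfl fun k hk =>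
      choose_mul_factorial_mul_coeff_padeDen (mem_range_succ_iff.mp hk) (by omega),
    ← mul_sum, sum_range_choose_mul_descPochhammer_eval,
    descFactorial_mul_descPochhammer_eval_two_mul_sub hs, factorial_mul_padeCoeff hs]

theorem coeff_exp_mul_padeDen_two_mul_add_one (n : ℕ) :
    coeff (2 * n + 1) (exp ℚ * padeDen n) = (-1) ^ n * n ! ^ 2 / ((2 * n)! * (2 * n + 1)!) := by
  -- The full alternating sum vanishes as `n < 2n + 1`; the coefficient lacks its `k = 0` term,
  -- because `padeCoeff n (2n + 1) = 0`.
  have hvanish :=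
    sum_range_choose_mul_descPochhammer_eval n (2 * n + 1) (2 * n - (2 * n + 1 : ℕ) : ℚ)
  rw [descFactorial_eq_zero_iff_lt.mpr (by omega), cast_zero, zero_mul, sum_range_succ'] at hvanish
  apply mul_left_cancel₀ (cast_ne_zero.mpr (factorial_ne_zero _) : ((2 * n + 1)! : ℚ) ≠ 0)
  rw [factorial_mul_coeff_exp_mul, sum_range_succ', coeff_padeDen, padeCoeff_of_lt (by omega),
    sum_congr rfl fun k hk =>
      choose_mul_factorial_mul_coeff_padeDen (s := 2 * n + 1) (k := k + 1)
        (by simp at hk; omega) (by omega),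
    ← mul_sum, eq_neg_of_add_eq_zero_left hvanish]
  have hm1 : (2 * n - (2 * n + 1 : ℕ) + (0 : ℕ) : ℚ) = -1 := by push_cast; ring
  rw [hm1, descPochhammer_eval_neg_one, Odd.neg_one_pow (by simp)]
  simp
  field_simp

theorem coeff_padeNum_sub_padeDen (n k : ℕ) :
    coeff k (padeNum n - padeDen n) = (1 - (-1) ^ k) * padeCoeff n k := by
  rw [map_sub, coeff_padeDen, padeNum, coeff_mk]
  ring

theorem X_pow_dvd_padeRemainder (n : ℕ) : X ^ (2 * n + 1) ∣ padeRemainder n :=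
  X_pow_dvd_iff.mpr fun s hs => by
    rw [padeRemainder, map_sub, coeff_exp_mul_padeDen (by omega), padeNum, coeff_mk, sub_self]

theorem coeff_padeRemainder_two_mul_add_one (n : ℕ) :
    coeff (2 * n + 1) (padeRemainder n) = padeError n := by
  rw [padeRemainder, map_sub, padeNum, coeff_mk, padeCoeff_of_lt (by omega),
    coeff_exp_mul_padeDen_two_mul_add_one, padeError]
  ring

theorem bernoulliPowerSeries_mul_padeNum_sub_padeDen (n : ℕ) :
    bernoulliPowerSeries ℚ * (padeNum n - padeDen n) =
      X * padeDen n + bernoulliPowerSeries ℚ * padeRemainder n := by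
  rw [padeRemainder]
  linear_combination (padeDen n) * bernoulliPowerSeries_mul_exp_sub_one ℚ

theorem coeff_bernoulliPowerSeries_mul_padeNum_sub_padeDen (n m : ℕ) :
    coeff (2 * m + 1) (bernoulliPowerSeries ℚ * (padeNum n - padeDen n)) =
      ∑ i ∈ range (m + 1),
        bernoulli (2 * i) / (2 * i)! * (2 * padeCoeff n (2 * (m - i) + 1)) := by
  rw [coeff_mul, Nat.sum_antidiagonal_eq_sum_range_succ
      (fun p q => coeff p (bernoulliPowerSeries ℚ) * coeff q (padeNum n - padeDen n)),
    show (2 * m + 1).succ = 2 * (m + 1) by omega, sum_range_two_mul]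
  have hodd : ∀ i ∈ range (m + 1), coeff (2 * i + 1) (bernoulliPowerSeries ℚ) *
      coeff (2 * m + 1 - (2 * i + 1)) (padeNum n - padeDen n) = 0 := by
    intro i hi
    rw [coeff_padeNum_sub_padeDen, show 2 * m + 1 - (2 * i + 1) = 2 * (m - i) by omega, pow_mul]
    simp
  have heven : ∀ i ∈ range (m + 1), coeff (2 * i) (bernoulliPowerSeries ℚ) *
      coeff (2 * m + 1 - 2 * i) (padeNum n - padeDen n) =
        bernoulli (2 * i) / (2 * i)! * (2 * padeCoeff n (2 * (m - i) + 1)) := by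
    intro i hi
    rw [coeff_padeNum_sub_padeDen, show 2 * m + 1 - 2 * i = 2 * (m - i) + 1 by simp at hi; omega,
      pow_succ, pow_mul, bernoulliPowerSeries, coeff_mk, Algebra.algebraMap_self, RingHom.id_apply]
    ring
  rw [sum_eq_zero hodd, add_zero, sum_congr rfl heven]

theorem coeff_bernoulliPowerSeries_mul_padeNum_sub_padeDen_of_lt {n m : ℕ} (h₁ : n < 2 * m)
    (h₂ : m < n) :
    coeff (2 * m + 1) (bernoulliPowerSeries ℚ * (padeNum n - padeDen n)) = 0 := by
  rw [bernoulliPowerSeries_mul_padeNum_sub_padeDen, map_add, coeff_succ_X_mul, coeff_padeDen,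
    padeCoeff_of_lt h₁, coeff_mul_of_X_pow_dvd (X_pow_dvd_padeRemainder n) (by omega)]
  ring

theorem coeff_bernoulliPowerSeries_mul_padeNum_sub_padeDen_self {n : ℕ} (hn : 0 < n) :
    coeff (2 * n + 1) (bernoulliPowerSeries ℚ * (padeNum n - padeDen n)) = padeError n := by
  rw [bernoulliPowerSeries_mul_padeNum_sub_padeDen, map_add, coeff_succ_X_mul, coeff_padeDen,
    padeCoeff_of_lt (by omega), coeff_mul_of_X_pow_dvd_self (X_pow_dvd_padeRemainder n),
    coeff_padeRemainder_two_mul_add_one]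
  simp [bernoulliPowerSeries]

end

end PowerSeries

open PowerSeries

def bernoulliHankel (t n : ℕ) : Matrix (Fin n) (Fin n) ℚ :=
  Matrix.of fun a b => bernoulli (2 * (a + b + t)) / (2 * (a + b + t))!

noncomputable def padeOddMatrix (t n : ℕ) : Matrix (Fin n) (Fin n) ℚ :=
  Matrix.of fun b j => if b ≤ j then 2 * padeCoeff (2 * j + t) (2 * (j - b) + 1) else 0

theorem det_padeOddMatrix {t : ℕ} (ht : 0 < t) (n : ℕ) : (padeOddMatrix t n).det = 1 := by
  rw [Matrix.det_of_isUpperTriangular (M := padeOddMatrix t n) fun i j (hij : j < i) =>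
    if_neg (not_le.mpr hij)]
  refine prod_eq_one fun j _ => ?_
  rw [padeOddMatrix, Matrix.of_apply, if_pos le_rfl, Nat.sub_self, padeCoeff_one (by omega)]
  norm_num

theorem bernoulliHankel_mul_padeOddMatrix_apply {t n : ℕ} (ht : t ≤ 2) (a j : Fin n) :
    (bernoulliHankel t n * padeOddMatrix t n) a j = coeff (2 * (a + t + j) + 1)
      (bernoulliPowerSeries ℚ * (padeNum (2 * j + t) - padeDen (2 * j + t))) := by
  rw [coeff_bernoulliPowerSeries_mul_padeNum_sub_padeDen,
    show a + t + j + 1 = (a + t) + (j + 1) by ring,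
    sum_range_add, sum_eq_zero fun i hi => by
      rw [padeCoeff_of_lt (by simp at hi; omega), mul_zero, mul_zero], zero_add, Matrix.mul_apply]
  simp only [bernoulliHankel, padeOddMatrix, Matrix.of_apply, mul_ite, mul_zero,
    Fin.le_iff_val_le_val]
  rw [Fin.sum_univ_eq_sum_range (fun b => if b ≤ (j : ℕ) then
      bernoulli (2 * (a + b + t)) / (2 * (a + b + t))! *
        (2 * padeCoeff (2 * j + t) (2 * (j - b) + 1)) else 0), ← sum_filter,
    show (range n).filter (· ≤ (j : ℕ)) = range (j + 1) by ext; simp; omega]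
  refine sum_congr rfl fun b hb => ?_
  rw [show a + t + j - (a + t + b) = j - b by omega, show a + b + t = a + t + b by ring]

theorem det_bernoulliHankel {t : ℕ} (ht₀ : 0 < t) (ht₂ : t ≤ 2) (n : ℕ) :
    (bernoulliHankel t n).det = ∏ j ∈ range n, padeError (2 * j + t) := by
  have hdet : (bernoulliHankel t n).det = (bernoulliHankel t n * padeOddMatrix t n).det := by
    rw [Matrix.det_mul, det_padeOddMatrix ht₀, mul_one]
  rw [hdet, Matrix.det_of_isLowerTriangular _ fun a j (h : a < j) => ?_,
    ← Fin.prod_univ_eq_prod_range (fun j => padeError (2 * j + t))]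
  · refine prod_congr rfl fun j _ => ?_
    rw [bernoulliHankel_mul_padeOddMatrix_apply ht₂,
      show 2 * (j + t + j) + 1 = 2 * (2 * j + t) + 1 by ring,
      coeff_bernoulliPowerSeries_mul_padeNum_sub_padeDen_self (by omega)]
  · rw [bernoulliHankel_mul_padeOddMatrix_apply ht₂,
      coeff_bernoulliPowerSeries_mul_padeNum_sub_padeDen_of_lt (by omega) (by omega)]

theorem factorial_two_mul_mul_factorial_two_mul_add_one (k : ℕ) :
    (2 * k)! * (2 * k + 1)! = 2 ^ (2 * k) * k ! ^ 2 * (2 * k - 1)‼ * (2 * k + 1)‼ := by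
  cases k with
  | zero => rfl
  | succ k =>
    rw [show 2 * (k + 1) = 2 * k + 1 + 1 by ring, factorial_eq_mul_doubleFactorial,
      factorial_eq_mul_doubleFactorial (2 * k + 1 + 1), show 2 * k + 1 + 1 = 2 * (k + 1) by ring,
      doubleFactorial_two_mul, show 2 * (k + 1) - 1 = 2 * k + 1 by omega]
    ring

theorem padeError_eq (k : ℕ) :
    padeError k = (-1) ^ (k + 1) / (2 ^ (2 * k) * (2 * k - 1)‼ * (2 * k + 1)‼) := by
  rw [padeError, ← cast_mul, factorial_two_mul_mul_factorial_two_mul_add_one]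
  push_cast
  field_simp

theorem prod_range_padeError {t : ℕ} (ht₀ : 0 < t) (ht₂ : t ≤ 2) (n : ℕ) :
    ∏ j ∈ range n, padeError (2 * j + t) = (-1) ^ ((t + 1) * n) /
      (2 ^ (2 * n * (n + t - 1)) * ∏ m ∈ range (2 * n + t - 1), ((2 * m + 1)‼ : ℚ)) := by
  obtain ⟨s, rfl⟩ : ∃ s, t = s + 1 := ⟨t - 1, by omega⟩
  simp only [Nat.add_succ_sub_one]
  have hs : s ≤ 1 := by omega
  induction n with
  | zero => interval_cases s <;> simp
  | succ n ih =>
    rw [prod_range_succ, ih, padeError_eq, show 2 * (n + 1) + s = 2 * n + s + 1 + 1 by ring,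
      prod_range_succ, prod_range_succ,
      show 2 * (2 * n + (s + 1)) - 1 = 2 * (2 * n + s) + 1 by omega,
      show 2 * n + (s + 1) + 1 = 2 * n + (s + 1 + 1) by ring, pow_add (-1 : ℚ) (2 * n),
      (even_two_mul n).neg_one_pow, one_mul, mul_add _ n 1, mul_one,
      pow_add (-1 : ℚ) ((s + 1 + 1) * n), show 2 * n + (s + 1) = 2 * n + s + 1 by ring]
    field_simp
    ring

theorem prod_Icc_one_sub_one_eq_prod_range {M : Type*} [CommMonoid M] {f : ℕ → M} (hf : f 0 = 1)
    (N : ℕ) : ∏ m ∈ Icc 1 (N - 1), f m = ∏ m ∈ range N, f m := by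
  cases N with
  | zero => simp
  | succ N =>
    rw [prod_range_succ', hf, mul_one, Nat.add_sub_cancel, ← Ico_add_one_right_eq_Icc,
      prod_Ico_eq_prod_range]
    simp [add_comm]

theorem stmt_6_general (n : ℕ) :
    ((Matrix.of fun a b : Fin n =>
        bernoulli (2 * ((a : ℕ) + 1) + 2 * ((b : ℕ) + 1) - 2) /
          (Nat.factorial (2 * ((a : ℕ) + 1) + 2 * ((b : ℕ) + 1) - 2) : ℚ)).det
      = 1 / ((2 : ℚ) ^ (2 * n ^ 2) *
          ∏ m ∈ Finset.Icc 1 (2 * n - 1), (Nat.doubleFactorial (2 * m + 1) : ℚ)))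
    ∧ (Matrix.of fun a b : Fin n =>
        bernoulli (2 * ((a : ℕ) + 1) + 2 * ((b : ℕ) + 1)) /
          (Nat.factorial (2 * ((a : ℕ) + 1) + 2 * ((b : ℕ) + 1)) : ℚ)).det
      = (-1 : ℚ) ^ n / ((2 : ℚ) ^ (2 * n * (n + 1)) *
          ∏ m ∈ Finset.Icc 1 (2 * n), (Nat.doubleFactorial (2 * m + 1) : ℚ)) := by
  have hone : ((2 * 0 + 1)‼ : ℚ) = 1 := rfl
  refine ⟨?_, ?_⟩
  · trans (bernoulliHankel 1 n).det
    · congr 1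
      ext a b
      rw [bernoulliHankel, Matrix.of_apply, Matrix.of_apply,
        show 2 * ((a : ℕ) + 1) + 2 * ((b : ℕ) + 1) - 2 = 2 * (a + b + 1) by omega]
    rw [det_bernoulliHankel one_pos one_le_two, prod_range_padeError one_pos one_le_two,
      ← prod_Icc_one_sub_one_eq_prod_range hone]
    simp [sq, pow_mul]
  · trans (bernoulliHankel 2 n).det
    · congr 1
      ext a b
      rw [bernoulliHankel, Matrix.of_apply, Matrix.of_apply,
        show 2 * ((a : ℕ) + 1) + 2 * ((b : ℕ) + 1) = 2 * (a + b + 2) by omega]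
    rw [det_bernoulliHankel two_pos le_rfl, prod_range_padeError two_pos le_rfl,
      ← prod_Icc_one_sub_one_eq_prod_range hone, show (2 + 1) * n = 2 * n + n by ring, pow_add,
      (even_two_mul n).neg_one_pow, one_mul]
    simp

theorem stmt_6 (n : ℕ) (hn : 1 ≤ n) :
    ((Matrix.of fun a b : Fin n =>
        bernoulli (2 * ((a : ℕ) + 1) + 2 * ((b : ℕ) + 1) - 2) /
          (Nat.factorial (2 * ((a : ℕ) + 1) + 2 * ((b : ℕ) + 1) - 2) : ℚ)).det
      = 1 / ((2 : ℚ) ^ (2 * n ^ 2) *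
          ∏ m ∈ Finset.Icc 1 (2 * n - 1), (Nat.doubleFactorial (2 * m + 1) : ℚ)))
    ∧ (Matrix.of fun a b : Fin n =>
        bernoulli (2 * ((a : ℕ) + 1) + 2 * ((b : ℕ) + 1)) /
          (Nat.factorial (2 * ((a : ℕ) + 1) + 2 * ((b : ℕ) + 1)) : ℚ)).det
      = (-1 : ℚ) ^ n / ((2 : ℚ) ^ (2 * n * (n + 1)) *
          ∏ m ∈ Finset.Icc 1 (2 * n), (Nat.doubleFactorial (2 * m + 1) : ℚ)) :=
  stmt_6_general n
end

section
/- Let k ≥ 4 be an integer with k ≡ 0 (mod 4) and set k' = k/2 − 1. Then the determinant of the (k'−1)×(k'−1) matrix with (i,j) entry E(i,j) = (−1)^{k−i} · ((k−i)!·(k−j)!/k!) · B_{k−i−j+1}/(k−i−j+1)! (indices 2 ≤ i,j ≤ k') equals 1/( (k/4) · (k'!)^2 · ∏_{a=2}^{k'} binom(k,a) ). -/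
open Finset PowerSeries Matrix

namespace Stmt9

noncomputable def qc (m j : ℕ) : ℚ := (-1)^j * (m.choose j) * (2*m - j).factorial / (2*m).factorial
noncomputable def qa (m j : ℕ) : ℚ := (m.choose j) * (2*m - j).factorial / (2*m).factorial
noncomputable def Qp (m : ℕ) : PowerSeries ℚ := ∑ j ∈ range (m+1), C (qc m j) * X^j
noncomputable def Qn (m : ℕ) : PowerSeries ℚ := ∑ j ∈ range (m+1), C (qa m j) * X^j
noncomputable def Rr (m : ℕ) : PowerSeries ℚ := Qp m * exp ℚ - Qn m
noncomputable def tau (n a : ℕ) : ℚ :=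
  -2 * ((2*n+2).choose (2*a+1)) * (4*n+3-2*a).factorial / (4*n+4).factorial
noncomputable def Wd (n : ℕ) : PowerSeries ℚ := ∑ a ∈ range (n+1), C (tau n a) * X^(2*a+1)
noncomputable abbrev B : PowerSeries ℚ := bernoulliPowerSeries ℚ

lemma coeffB (t : ℕ) : coeff t B = bernoulli t / t.factorial := by
  simp [bernoulliPowerSeries, coeff_mk, Algebra.algebraMap_self]

lemma coeff_sum_CXpow (s : Finset ℕ) (f : ℕ → ℚ) (e : ℕ → ℕ) (d : ℕ) :
    coeff d (∑ j ∈ s, C (f j) * X^(e j)) = ∑ j ∈ s, if d = e j then f j else 0 := by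
  rw [map_sum]
  refine Finset.sum_congr rfl fun j _ => ?_
  rw [coeff_C_mul, coeff_X_pow]
  simp [mul_ite]

lemma coeff_sum_CXpow_mul (s : Finset ℕ) (f : ℕ → ℚ) (e : ℕ → ℕ) (g : PowerSeries ℚ) (d : ℕ) :
    coeff d ((∑ j ∈ s, C (f j) * X^(e j)) * g)
      = ∑ j ∈ s, if e j ≤ d then f j * coeff (d - e j) g else 0 := by
  rw [Finset.sum_mul, map_sum]
  refine Finset.sum_congr rfl fun j _ => ?_
  rw [mul_assoc, coeff_C_mul, coeff_X_pow_mul']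
  simp [mul_ite]

lemma qc_eq_zero {m j : ℕ} (h : m < j) : qc m j = 0 := by
  simp [qc, Nat.choose_eq_zero_of_lt h]

lemma qa_eq_zero {m j : ℕ} (h : m < j) : qa m j = 0 := by
  simp [qa, Nat.choose_eq_zero_of_lt h]

lemma coeff_Qp (m d : ℕ) : coeff d (Qp m) = qc m d := by
  rw [Qp, coeff_sum_CXpow]
  have : ∑ j ∈ range (m+1), (if d = j then qc m j else 0)
      = if d ∈ range (m+1) then qc m d else 0 := Finset.sum_ite_eq (range (m+1)) d _
  rw [this]
  by_cases hd : d ∈ range (m+1)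
  · simp [hd]
  · rw [if_neg hd]
    rw [mem_range] at hd
    exact (qc_eq_zero (by omega)).symm

lemma coeff_Qn (m d : ℕ) : coeff d (Qn m) = qa m d := by
  rw [Qn, coeff_sum_CXpow]
  have : ∑ j ∈ range (m+1), (if d = j then qa m j else 0)
      = if d ∈ range (m+1) then qa m d else 0 := Finset.sum_ite_eq (range (m+1)) d _
  rw [this]
  by_cases hd : d ∈ range (m+1)
  · simp [hd]
  · rw [if_neg hd]
    rw [mem_range] at hd
    exact (qa_eq_zero (by omega)).symm



lemma polyid (m : ℕ) :
    ∑ j ∈ range (m+1), Polynomial.C ((-1:ℚ)^j * (m.choose j))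
      * Polynomial.X^j * (1 + Polynomial.X)^(2*m-j) = (1+Polynomial.X)^m := by
  have h : ∀ j ∈ range (m+1), Polynomial.C ((-1:ℚ)^j * (m.choose j))
      * Polynomial.X^j * (1 + Polynomial.X)^(2*m-j)
      = ((-Polynomial.X)^j * (1+Polynomial.X)^(m-j) * ((m.choose j : ℕ) : Polynomial ℚ))
        * (1+Polynomial.X)^m := by
    intro j hj
    rw [mem_range] at hj
    have h2 : 2*m - j = (m - j) + m := by omega
    have h3 : (-Polynomial.X : Polynomial ℚ)^j = Polynomial.C ((-1:ℚ)^j) * Polynomial.X^j := by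
      rw [neg_pow]
      congr 1
      rw [map_pow]
      norm_num
    have h4 : ((m.choose j : ℕ) : Polynomial ℚ) = Polynomial.C ((m.choose j : ℕ) : ℚ) := by
      push_cast; simp
    rw [h2, pow_add, h3, h4, Polynomial.C_mul]
    ring
  rw [Finset.sum_congr rfl h, ← Finset.sum_mul, ← add_pow]
  norm_num

lemma bid (m N : ℕ) :
    ∑ j ∈ range (m+1), (if j ≤ N then ((-1:ℚ)^j * (m.choose j) * ((2*m-j).choose (N-j))) else 0)
      = (m.choose N : ℚ) := by
  have h := congrArg (fun q : Polynomial ℚ => q.coeff N) (polyid m)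
  simp only [Polynomial.finset_sum_coeff] at h
  rw [Polynomial.coeff_one_add_X_pow] at h
  rw [← h]
  refine Finset.sum_congr rfl fun j _ => ?_
  have harr : Polynomial.C ((-1:ℚ)^j * (m.choose j)) * Polynomial.X^j * (1 + Polynomial.X)^(2*m-j)
      = Polynomial.C ((-1:ℚ)^j * (m.choose j)) * ((1 + Polynomial.X)^(2*m-j) * Polynomial.X^j) := by
    ring
  rw [harr, Polynomial.coeff_C_mul, Polynomial.coeff_mul_X_pow',
    Polynomial.coeff_one_add_X_pow]
  split_ifs <;> ring



lemma pf : ∀ (m : ℕ) (x : ℚ), (∀ i ∈ range (m+1), x + i ≠ 0) →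
    ∑ i ∈ range (m+1), (-1:ℚ)^i * (m.choose i) / (x + i)
      = (m.factorial : ℚ) / ∏ i ∈ range (m+1), (x + i) := by
  intro m
  induction m with
  | zero => intro x hx; simp
  | succ m ih =>
    intro x hx
    have hx0 : ∀ i ∈ range (m+1), x + i ≠ 0 := by
      intro i hi; exact hx i (by rw [mem_range] at hi ⊢; omega)
    have hx1 : ∀ i ∈ range (m+1), (x+1) + i ≠ 0 := by
      intro i hi
      have h := hx (i+1) (by rw [mem_range] at hi ⊢; omega)
      push_cast at h ⊢
      intro hc; apply h; linarith
    have key : ∑ i ∈ range (m+2), (-1:ℚ)^i * ((m+1).choose i) / (x + i)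
        = (∑ i ∈ range (m+1), (-1:ℚ)^i * (m.choose i) / (x + i))
          - ∑ i ∈ range (m+1), (-1:ℚ)^i * (m.choose i) / ((x+1) + i) := by
      have hsplit : ∀ i ∈ range (m+2), (-1:ℚ)^i * ((m+1).choose i) / (x + i)
          = (-1:ℚ)^i * (m.choose i) / (x + i)
            + (if i = 0 then 0 else (-1:ℚ)^i * (m.choose (i-1)) / (x + i)) := by
        intro i _
        match i with
        | 0 => simp
        | (i+1) =>
          rw [if_neg (by omega)]
          have : ((m+1).choose (i+1) : ℚ) = (m.choose (i+1) : ℚ) + (m.choose i : ℚ) := by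
            rw [Nat.choose_succ_succ]; push_cast; ring
          rw [this]
          simp only [Nat.add_sub_cancel]
          ring
      rw [Finset.sum_congr rfl hsplit, Finset.sum_add_distrib]
      have h1 : ∑ i ∈ range (m+2), (-1:ℚ)^i * (m.choose i) / (x + i)
          = ∑ i ∈ range (m+1), (-1:ℚ)^i * (m.choose i) / (x + i) := by
        rw [Finset.sum_range_succ, Nat.choose_eq_zero_of_lt (by omega)]
        simp
      have h2 : (∑ i ∈ range (m+2), if i = 0 then 0 else (-1:ℚ)^i * (m.choose (i-1)) / (x + i))
          = - ∑ i ∈ range (m+1), (-1:ℚ)^i * (m.choose i) / ((x+1) + i) := by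
        rw [Finset.sum_range_succ' (fun i => if i = 0 then 0 else (-1:ℚ)^i * (m.choose (i-1)) / (x + i)) (m+1)]
        simp only [if_neg (Nat.succ_ne_zero _), if_pos rfl, Nat.add_sub_cancel]
        rw [if_pos trivial, add_zero, eq_neg_iff_add_eq_zero, ← Finset.sum_add_distrib]
        refine Finset.sum_eq_zero fun i _ => ?_
        push_cast
        ring
      rw [h1, h2]
      ring
    rw [key, ih x hx0, ih (x+1) hx1]
    have hP1 : (∏ i ∈ range (m+1), (x + i)) ≠ 0 := Finset.prod_ne_zero_iff.mpr hx0
    have hP2 : (∏ i ∈ range (m+1), ((x+1) + i)) ≠ 0 := Finset.prod_ne_zero_iff.mpr hx1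
    have hQ1 : ∏ i ∈ range (m+2), (x + i) = (∏ i ∈ range (m+1), (x + i)) * (x + (m+1)) := by
      rw [Finset.prod_range_succ]; push_cast; ring
    have hQ2 : ∏ i ∈ range (m+2), (x + i) = (∏ i ∈ range (m+1), ((x+1) + i)) * x := by
      rw [Finset.prod_range_succ' (fun i => x + i) (m+1)]
      simp only [Nat.cast_zero, add_zero]
      congr 1
      refine Finset.prod_congr rfl fun i _ => ?_
      push_cast; ring
    have hxx : x ≠ 0 := by
      have := hx 0 (by simp)
      simpa using this
    have hxm : x + (m+1) ≠ 0 := by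
      have := hx (m+1) (by rw [mem_range]; omega)
      push_cast at this ⊢
      exact this
    have hrel : (∏ i ∈ range (m+1), ((x+1) + i)) * x
        = (∏ i ∈ range (m+1), (x + i)) * (x + (m+1)) := by rw [← hQ2, hQ1]
    have hPp : (∏ i ∈ range (m+1), ((x+1) + i))
        = (∏ i ∈ range (m+1), (x + i)) * (x + (m+1)) / x := (eq_div_iff hxx).mpr hrel
    rw [hQ1, hPp]
    have hfs : ((m+1).factorial : ℚ) = (m+1) * m.factorial := by
      rw [Nat.factorial_succ]; push_cast; ring
    rw [hfs]
    field_simp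
    ring


lemma coeff_Qp_mul (m d : ℕ) (g : PowerSeries ℚ) :
    coeff d (Qp m * g)
      = ∑ j ∈ range (m+1), if j ≤ d then qc m j * coeff (d - j) g else 0 := by
  rw [Qp]
  exact coeff_sum_CXpow_mul (range (m+1)) (qc m) (fun j => j) g d

lemma coeff_Rr {m N : ℕ} (h : N ≤ 2*m) : coeff N (Rr m) = 0 := by
  rw [Rr, map_sub, coeff_Qn, coeff_Qp_mul]
  have hterm : ∀ j ∈ range (m+1),
      (if j ≤ N then qc m j * coeff (N-j) (exp ℚ) else 0)
      = ((2*m-N).factorial : ℚ)/((2*m).factorial : ℚ) *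
        (if j ≤ N then ((-1:ℚ)^j * (m.choose j) * ((2*m-j).choose (N-j))) else 0) := by
    intro j hj
    rw [mem_range] at hj
    split_ifs with hjN
    · rw [coeff_exp]
      have heq : algebraMap ℚ ℚ (1/((N-j).factorial : ℚ)) = 1/((N-j).factorial : ℚ) := by
        simp
      rw [heq]
      have hfac : ((2*m-j).choose (N-j) : ℚ) * ((N-j).factorial : ℚ) * ((2*m-N).factorial : ℚ)
          = ((2*m-j).factorial : ℚ) := by
        have h6 := Nat.choose_mul_factorial_mul_factorial (show N-j ≤ 2*m-j by omega)
        have h5 : 2*m-j-(N-j) = 2*m-N := by omega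
        rw [h5] at h6
        exact_mod_cast congrArg (Nat.cast : ℕ → ℚ) h6
      rw [qc, ← hfac]
      have hne1 : ((N-j).factorial : ℚ) ≠ 0 := Nat.cast_ne_zero.mpr (Nat.factorial_ne_zero _)
      have hne2 : ((2*m).factorial : ℚ) ≠ 0 := Nat.cast_ne_zero.mpr (Nat.factorial_ne_zero _)
      field_simp
    · simp
  rw [Finset.sum_congr rfl hterm, ← Finset.mul_sum, bid, qa]
  ring

lemma prod_shift (a : ℕ) : ∀ b : ℕ, a.factorial * ∏ i ∈ range b, (a+1+i) = (a+b).factorial := by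
  intro b
  induction b with
  | zero => simp
  | succ b ih =>
    rw [Finset.prod_range_succ, ← mul_assoc, ih]
    have : a + (b+1) = (a+b) + 1 := by omega
    rw [this, Nat.factorial_succ]
    ring

lemma coeff_Rr_top (m : ℕ) : coeff (2*m+1) (Rr m)
    = (-1:ℚ)^m * ((m.factorial:ℚ))^2/(((2*m).factorial : ℚ) * ((2*m+1).factorial : ℚ)) := by
  rw [Rr, map_sub, coeff_Qn, coeff_Qp_mul]
  rw [qa_eq_zero (by omega), sub_zero]
  have hterm : ∀ j ∈ range (m+1),
      (if j ≤ 2*m+1 then qc m j * coeff (2*m+1-j) (exp ℚ) else 0)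
      = (1/((2*m).factorial : ℚ)) * ((-1:ℚ)^j * (m.choose j) / ((2*m+1-j : ℕ) : ℚ)) := by
    intro j hj
    rw [mem_range] at hj
    rw [if_pos (by omega), coeff_exp]
    have heq : algebraMap ℚ ℚ (1/((2*m+1-j).factorial : ℚ)) = 1/((2*m+1-j).factorial : ℚ) := by
      simp
    rw [heq, qc]
    have hfs : ((2*m+1-j).factorial : ℚ) = ((2*m+1-j : ℕ) : ℚ) * ((2*m-j).factorial : ℚ) := by
      have h5 : 2*m+1-j = (2*m-j) + 1 := by omega
      rw [h5, Nat.factorial_succ]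
      have h6 : ((2*m-j+1 : ℕ) : ℚ) = ((2*m+1-j : ℕ) : ℚ) := by
        norm_cast
        omega
      push_cast [← h6]
      push_cast
      ring
    rw [hfs]
    have hne1 : ((2*m-j).factorial : ℚ) ≠ 0 := Nat.cast_ne_zero.mpr (Nat.factorial_ne_zero _)
    have hne2 : ((2*m).factorial : ℚ) ≠ 0 := Nat.cast_ne_zero.mpr (Nat.factorial_ne_zero _)
    have hne3 : ((2*m+1-j : ℕ) : ℚ) ≠ 0 := by
      have h0 : 0 < 2*m+1-j := by omega
      exact_mod_cast Nat.pos_iff_ne_zero.mp h0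
    field_simp
  rw [Finset.sum_congr rfl hterm, ← Finset.mul_sum]
  have hreflect : ∑ j ∈ range (m+1), ((-1:ℚ)^j * (m.choose j) / ((2*m+1-j : ℕ) : ℚ))
      = (-1:ℚ)^m * ∑ j ∈ range (m+1), ((-1:ℚ)^j * (m.choose j) / (((m:ℚ)+1) + j)) := by
    rw [← Finset.sum_range_reflect]
    rw [Finset.mul_sum]
    refine Finset.sum_congr rfl fun j hj => ?_
    rw [mem_range] at hj
    have hj' : j ≤ m := by omega
    have h7 : m + 1 - 1 - j = m - j := by omega
    rw [h7]
    have h8 : m.choose (m-j) = m.choose j := Nat.choose_symm hj'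
    have h9 : (2*m+1-(m-j)) = m+1+j := by omega
    rw [h8, h9]
    have hsq : (-1:ℚ)^j * (-1:ℚ)^j = 1 := by
      rw [← pow_add, ← two_mul, pow_mul]
      norm_num
    have h2 : (-1:ℚ)^(m-j) * (-1:ℚ)^j = (-1:ℚ)^m := by
      rw [← pow_add]
      congr 1
      omega
    have h3 : (-1:ℚ)^(m-j) = (-1:ℚ)^m * (-1:ℚ)^j := by
      calc (-1:ℚ)^(m-j) = (-1:ℚ)^(m-j) * ((-1:ℚ)^j * (-1:ℚ)^j) := by rw [hsq]; ring
      _ = ((-1:ℚ)^(m-j) * (-1:ℚ)^j) * (-1:ℚ)^j := by ring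
      _ = (-1:ℚ)^m * (-1:ℚ)^j := by rw [h2]
    rw [h3]
    have h10 : ((m+1+j : ℕ) : ℚ) = ((m:ℚ)+1) + j := by push_cast; ring
    rw [h10]
    ring
  rw [hreflect]
  have hx : ∀ i ∈ range (m+1), ((m:ℚ)+1) + i ≠ 0 := by
    intro i _
    positivity
  rw [pf m ((m:ℚ)+1) hx]
  have hprod : ∏ i ∈ range (m+1), (((m:ℚ)+1) + i) = ((2*m+1).factorial : ℚ)/(m.factorial : ℚ) := by
    have h11 := prod_shift m (m+1)
    have h12 : m + (m+1) = 2*m+1 := by omega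
    rw [h12] at h11
    have := congrArg (Nat.cast : ℕ → ℚ) h11
    push_cast at this
    rw [eq_div_iff (show (m.factorial : ℚ) ≠ 0 from Nat.cast_ne_zero.mpr (Nat.factorial_ne_zero _))]
    rw [← this]
    ring
  rw [hprod]
  have hne2 : ((2*m).factorial : ℚ) ≠ 0 := Nat.cast_ne_zero.mpr (Nat.factorial_ne_zero _)
  have hne4 : ((2*m+1).factorial : ℚ) ≠ 0 := Nat.cast_ne_zero.mpr (Nat.factorial_ne_zero _)
  have hne5 : (m.factorial : ℚ) ≠ 0 := Nat.cast_ne_zero.mpr (Nat.factorial_ne_zero _)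
  field_simp

lemma Wd_eq (n : ℕ) : Wd n = Qp (2*n+2) - Qn (2*n+2) := by
  ext d
  rw [map_sub, coeff_Qp, coeff_Qn, Wd, coeff_sum_CXpow]
  rcases Nat.even_or_odd d with he | ho
  · rw [Finset.sum_eq_zero (fun a _ => if_neg (by rcases he with ⟨t, ht⟩; omega))]
    rw [qc, qa, he.neg_one_pow]
    ring
  · obtain ⟨c, hc⟩ := ho
    by_cases hcn : c ≤ n
    · have hcong : ∀ a ∈ range (n+1), (if d = 2*a+1 then tau n a else 0)
          = (if a = c then tau n a else 0) := by
        intro a _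
        exact if_congr (by omega) rfl rfl
      rw [Finset.sum_congr rfl hcong, Finset.sum_ite_eq' (range (n+1)) c (tau n),
        if_pos (mem_range.mpr (by omega))]
      rw [qc, qa, hc]
      have hodd : Odd (2*c+1) := ⟨c, by omega⟩
      rw [hodd.neg_one_pow]
      have h1 : 2*(2*n+2) - (2*c+1) = 4*n+3-2*c := by omega
      have h2 : 2*(2*n+2) = 4*n+4 := by omega
      rw [h1, h2, tau]
      ring
    · rw [Finset.sum_eq_zero (fun a ha => if_neg (by rw [mem_range] at ha; omega))]
      rw [qc, qa, hc, Nat.choose_eq_zero_of_lt (by omega)]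
      simp

lemma keyWB (n : ℕ) : Wd n * B = Rr (2*n+2) * B - X * Qp (2*n+2) := by
  have h := bernoulliPowerSeries_mul_exp_sub_one ℚ
  rw [Wd_eq, Rr]
  linear_combination (-(Qp (2*n+2))) * h

lemma Rdvd (m : ℕ) : (X : PowerSeries ℚ)^(2*m+1) ∣ Rr m :=
  PowerSeries.X_pow_dvd_iff.mpr fun d hd => coeff_Rr (by omega)

lemma tau_zero (n : ℕ) : tau n 0 = -1 := by
  rw [tau]
  have h4 : 4*n+4 = (4*n+3)+1 := by omega
  rw [h4, Nat.factorial_succ]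
  have hne : ((4*n+3).factorial : ℚ) ≠ 0 := Nat.cast_ne_zero.mpr (Nat.factorial_ne_zero _)
  rw [Nat.choose_one_right]
  push_cast
  rw [div_eq_iff (by positivity)]
  ring

noncomputable def dg (n : ℕ) : ℚ :=
  -(((2*n+2).factorial : ℚ)^2/(((4*n+4).factorial : ℚ) * ((4*n+5).factorial : ℚ)))

lemma coeffB_zero : coeff 0 B = 1 := by
  rw [coeffB, bernoulli_zero]
  simp

lemma entry (n n' : ℕ) (h : n' ≤ n) :
    coeff (2*n+2*n'+6) (Wd n' * (Wd n * B)) = if n' = n then dg n else 0 := by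
  obtain ⟨Em, hEm⟩ := Rdvd (2*n+2)
  have hE0 : coeff 0 Em
      = ((2*n+2).factorial : ℚ)^2/(((4*n+4).factorial : ℚ) * ((4*n+5).factorial : ℚ)) := by
    have h1 := PowerSeries.coeff_X_pow_mul Em (2*(2*n+2)+1) 0
    rw [zero_add, ← hEm] at h1
    rw [← h1, coeff_Rr_top]
    have heven : Even (2*n+2) := ⟨n+1, by ring⟩
    rw [heven.neg_one_pow]
    have h5 : 4*n+4+1 = 4*n+5 := by omega
    rw [h5]
    ring
  rw [keyWB n, hEm, mul_sub, map_sub]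
  have hterm2 : coeff (2*n+2*n'+6) (Wd n' * (X * Qp (2*n+2))) = 0 := by
    rw [Wd, coeff_sum_CXpow_mul]
    refine Finset.sum_eq_zero fun b hb => ?_
    rw [mem_range] at hb
    rw [if_pos (by omega)]
    have h9 : (2*n+2*n'+6) - (2*b+1) = ((2*n+2*n'+4-2*b) + 1) := by omega
    rw [h9, coeff_succ_X_mul, coeff_Qp, qc_eq_zero (by omega)]
    ring
  have hassoc : (X : PowerSeries ℚ)^(2*(2*n+2)+1) * Em * B
      = (X : PowerSeries ℚ)^(2*(2*n+2)+1) * (Em * B) := by ring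
  rw [hassoc, hterm2, sub_zero]
  rw [Wd, coeff_sum_CXpow_mul]
  rcases eq_or_lt_of_le h with heq | hlt
  · subst heq
    rw [if_pos rfl]
    have hcong : ∀ b ∈ range (n'+1),
        (if 2*b+1 ≤ 2*n'+2*n'+6 then tau n' b * coeff ((2*n'+2*n'+6) - (2*b+1))
            ((X : PowerSeries ℚ)^(2*(2*n'+2)+1) * (Em * B)) else 0)
        = (if b = 0 then tau n' 0 * coeff 0 (Em * B) else 0) := by
      intro b hb
      rw [mem_range] at hb
      rw [if_pos (by omega)]
      by_cases hb0 : b = 0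
      · subst hb0
        rw [if_pos rfl]
        have h10 : (2*n'+2*n'+6) - (2*0+1) = 0 + (2*(2*n'+2)+1) := by omega
        rw [h10, PowerSeries.coeff_X_pow_mul]
      · rw [if_neg hb0]
        rw [PowerSeries.coeff_X_pow_mul']
        rw [if_neg (by omega)]
        ring
    rw [Finset.sum_congr rfl hcong, Finset.sum_ite_eq' (range (n'+1)) 0 (fun _ => tau n' 0 * coeff 0 (Em * B)),
      if_pos (mem_range.mpr (by omega))]
    have hmul0 : coeff 0 (Em * B) = coeff 0 Em * coeff 0 B := by
      simp [PowerSeries.coeff_zero_eq_constantCoeff, _root_.map_mul]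
    rw [hmul0, hE0, coeffB_zero, tau_zero, dg]
    ring
  · rw [if_neg (by omega)]
    refine Finset.sum_eq_zero fun b hb => ?_
    rw [mem_range] at hb
    rw [if_pos (by omega), PowerSeries.coeff_X_pow_mul', if_neg (by omega)]
    ring

lemma entry_sum (n n' : ℕ) (h : n' ≤ n) :
    ∑ b ∈ range (n'+1), (∑ a ∈ range (n+1), tau n (n-a) * coeff (2*(a+b)+4) B) * tau n' (n'-b)
      = if n' = n then dg n else 0 := by
  have hh := entry n n' h
  rw [Wd, coeff_sum_CXpow_mul] at hh
  have hstep : ∀ b ∈ range (n'+1),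
      (if 2*b+1 ≤ 2*n+2*n'+6 then tau n' b * coeff ((2*n+2*n'+6) - (2*b+1)) (Wd n * B) else 0)
      = tau n' b * ∑ a ∈ range (n+1), tau n a * coeff (2*((n-a)+(n'-b))+4) B := by
    intro b hb
    rw [mem_range] at hb
    rw [if_pos (by omega), Wd, coeff_sum_CXpow_mul]
    congr 1
    refine Finset.sum_congr rfl fun a ha => ?_
    rw [mem_range] at ha
    rw [if_pos (by omega)]
    have h1 : (2*n+2*n'+6) - (2*b+1) - (2*a+1) = 2*((n-a)+(n'-b))+4 := by omega
    rw [h1]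
  rw [Finset.sum_congr rfl hstep] at hh
  rw [← hh]
  rw [← Finset.sum_range_reflect
    (fun b => (∑ a ∈ range (n+1), tau n (n-a) * coeff (2*(a+b)+4) B) * tau n' (n'-b)) (n'+1)]
  refine Finset.sum_congr rfl fun b hb => ?_
  rw [mem_range] at hb
  have h2 : n'+1-1-b = n'-b := by omega
  have h3 : n'-(n'-b) = b := by omega
  rw [h2, h3]
  rw [← Finset.sum_range_reflect (fun a => tau n a * coeff (2*((n-a)+(n'-b))+4) B) (n+1)]
  rw [Finset.mul_sum, Finset.sum_mul]
  refine Finset.sum_congr rfl fun a ha => ?_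
  rw [mem_range] at ha
  have h4 : n+1-1-a = n-a := by omega
  have h5 : n-(n-a) = a := by omega
  rw [h4, h5]
  have h6 : 2*((n-a)+(n'-b))+4 = 2*((n-a)+(n'-b))+4 := rfl
  ring

noncomputable def Pm (p : ℕ) : Matrix (Fin p) (Fin p) ℚ :=
  Matrix.of fun n a : Fin p => if (a:ℕ) ≤ (n:ℕ) then tau n ((n:ℕ) - a) else 0

noncomputable def Am (p : ℕ) : Matrix (Fin p) (Fin p) ℚ :=
  Matrix.of fun a b : Fin p => coeff (2*((a:ℕ)+(b:ℕ))+4) B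

lemma fin_ite_sum (p n : ℕ) (hn : n < p) (g : ℕ → ℚ) :
    (∑ a : Fin p, if (a:ℕ) ≤ n then g a else 0) = ∑ a ∈ range (n+1), g a := by
  rw [Fin.sum_univ_eq_sum_range (fun a => if a ≤ n then g a else 0) p]
  have h1 : ∑ a ∈ range p, (if a ≤ n then g a else 0)
      = ∑ a ∈ range (n+1), (if a ≤ n then g a else 0) :=
    (Finset.sum_subset (Finset.range_subset_range.mpr (by omega))
      (fun x _ hx => if_neg (by rw [mem_range] at hx; omega))).symm
  rw [h1]
  exact Finset.sum_congr rfl fun a ha => if_pos (by rw [mem_range] at ha; omega)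

lemma PAP_entry (p : ℕ) (n n' : Fin p) (h : (n':ℕ) ≤ (n:ℕ)) :
    (Pm p * Am p * (Pm p)ᵀ) n n' = if (n':ℕ) = (n:ℕ) then dg (n:ℕ) else 0 := by
  rw [Matrix.mul_apply]
  have inner : ∀ b : Fin p, (Pm p * Am p) n b
      = ∑ a ∈ range ((n:ℕ)+1), tau n ((n:ℕ)-a) * coeff (2*(a+(b:ℕ))+4) B := by
    intro b
    rw [Matrix.mul_apply]
    rw [← fin_ite_sum p n n.isLt (fun a => tau n ((n:ℕ)-a) * coeff (2*(a+(b:ℕ))+4) B)]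
    refine Finset.sum_congr rfl fun a _ => ?_
    simp only [Pm, Am, Matrix.of_apply]
    split_ifs with h1
    · rfl
    · rw [zero_mul]
  have outer : ∑ b : Fin p, (Pm p * Am p) n b * (Pm p)ᵀ b n'
      = ∑ b ∈ range ((n':ℕ)+1),
          (∑ a ∈ range ((n:ℕ)+1), tau n ((n:ℕ)-a) * coeff (2*(a+b)+4) B) * tau n' ((n':ℕ)-b) := by
    rw [← fin_ite_sum p n' n'.isLt (fun b =>
      (∑ a ∈ range ((n:ℕ)+1), tau n ((n:ℕ)-a) * coeff (2*(a+b)+4) B) * tau n' ((n':ℕ)-b))]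
    refine Finset.sum_congr rfl fun b _ => ?_
    rw [inner b]
    simp only [Matrix.transpose_apply, Pm, Matrix.of_apply]
    split_ifs with h1
    · rfl
    · rw [mul_zero]
  rw [outer, entry_sum (n:ℕ) (n':ℕ) h]

lemma Am_symm (p : ℕ) : (Am p)ᵀ = Am p := by
  ext a b
  simp only [Matrix.transpose_apply, Am, Matrix.of_apply]
  have h1 : 2*((b:ℕ)+(a:ℕ))+4 = 2*((a:ℕ)+(b:ℕ))+4 := by omega
  rw [h1]

lemma PAP (p : ℕ) : Pm p * Am p * (Pm p)ᵀ = Matrix.diagonal (fun n : Fin p => dg (n:ℕ)) := by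
  have hsymm : (Pm p * Am p * (Pm p)ᵀ)ᵀ = Pm p * Am p * (Pm p)ᵀ := by
    rw [Matrix.transpose_mul, Matrix.transpose_mul, Matrix.transpose_transpose, Am_symm,
      Matrix.mul_assoc]
  ext n n'
  rcases le_or_gt (n':ℕ) (n:ℕ) with hle | hlt
  · rw [PAP_entry p n n' hle, Matrix.diagonal_apply]
    by_cases hv : (n':ℕ) = (n:ℕ)
    · rw [if_pos hv, if_pos (Fin.ext hv.symm : n = n')]
    · rw [if_neg hv, if_neg (fun hc => hv (by rw [hc]))]
  · have h1 : (Pm p * Am p * (Pm p)ᵀ) n n' = (Pm p * Am p * (Pm p)ᵀ) n' n := by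
      conv_lhs => rw [← hsymm]
      rw [Matrix.transpose_apply]
    rw [h1, PAP_entry p n' n (le_of_lt hlt), Matrix.diagonal_apply,
      if_neg (by omega), if_neg (by intro hc; rw [hc] at hlt; omega)]

lemma detP (p : ℕ) : (Pm p).det = (-1:ℚ)^p := by
  have htri : Matrix.BlockTriangular (Pm p) OrderDual.toDual := by
    intro i j hij
    have : (i:ℕ) < (j:ℕ) := hij
    simp only [Pm, Matrix.of_apply]
    rw [if_neg (by omega)]
  rw [Matrix.det_of_lowerTriangular (Pm p) htri]
  have hdiag : ∀ i : Fin p, Pm p i i = -1 := by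
    intro i
    simp only [Pm, Matrix.of_apply]
    rw [if_pos le_rfl, Nat.sub_self, tau_zero]
  rw [Finset.prod_congr rfl (fun i _ => hdiag i), Finset.prod_const]
  simp

lemma detAm (p : ℕ) : (Am p).det = ∏ n ∈ range p, dg n := by
  have h1 := congrArg Matrix.det (PAP p)
  rw [Matrix.det_mul, Matrix.det_mul, Matrix.det_transpose, detP, Matrix.det_diagonal] at h1
  have h2 : ((-1:ℚ)^p) * ((-1:ℚ)^p) = 1 := by
    rw [← pow_add, ← two_mul, pow_mul]
    norm_num
  have h3 : ∏ n : Fin p, dg (n:ℕ) = ∏ n ∈ range p, dg n :=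
    Fin.prod_univ_eq_prod_range (fun n => dg n) p
  rw [h3] at h1
  calc (Am p).det = (((-1:ℚ)^p) * ((-1:ℚ)^p)) * (Am p).det := by rw [h2]; ring
  _ = ((-1:ℚ)^p * (Am p).det * (-1:ℚ)^p) := by ring
  _ = ∏ n ∈ range p, dg n := h1

noncomputable def Sm (p : ℕ) : Matrix (Fin (2*p)) (Fin (2*p)) ℚ :=
  Matrix.of fun i j : Fin (2*p) => coeff (4*p+1-(i:ℕ)-(j:ℕ)) B

def ee (p : ℕ) : (Fin p ⊕ Fin p) ≃ Fin (2*p) where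
  toFun x := Sum.elim
    (fun a : Fin p => (⟨2*(p-1-(a:ℕ)), by have := a.isLt; omega⟩ : Fin (2*p)))
    (fun a : Fin p => (⟨2*(p-1-(a:ℕ))+1, by have := a.isLt; omega⟩ : Fin (2*p))) x
  invFun i := if (i:ℕ) % 2 = 0
    then Sum.inl ⟨p-1-(i:ℕ)/2, by have := i.isLt; omega⟩
    else Sum.inr ⟨p-1-(i:ℕ)/2, by have := i.isLt; omega⟩
  left_inv := by
    rintro (a | a)
    · have ha := a.isLt
      simp only [Sum.elim_inl]
      refine (if_pos (by omega)).trans ?_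
      exact congrArg Sum.inl (Fin.ext (by simp; omega))
    · have ha := a.isLt
      simp only [Sum.elim_inr]
      refine (if_neg (by omega)).trans ?_
      exact congrArg Sum.inr (Fin.ext (by simp; omega))
  right_inv := by
    intro i
    have hi := i.isLt
    dsimp only
    by_cases hpar : (i:ℕ) % 2 = 0
    · rw [if_pos hpar]
      simp only [Sum.elim_inl]
      exact Fin.ext (by simp; omega)
    · rw [if_neg hpar]
      simp only [Sum.elim_inr]
      exact Fin.ext (by simp; omega)

lemma coeffB_odd (t : ℕ) : coeff (2*t+3) B = 0 := by
  rw [coeffB, bernoulli_eq_bernoulli'_of_ne_one (by omega),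
    bernoulli'_eq_zero_of_odd ⟨t+1, by omega⟩ (by omega)]
  simp

lemma hSub (p : ℕ) : (Sm p).submatrix (ee p) (ee p) = fromBlocks (0 : Matrix (Fin p) (Fin p) ℚ) (Am p) (Am p) (0 : Matrix (Fin p) (Fin p) ℚ) := by
  ext x y
  rcases x with a | a <;> rcases y with b | b <;>
    have ha := a.isLt <;> have hb := b.isLt
  · simp only [Matrix.submatrix_apply, Matrix.fromBlocks_apply₁₁, Sm, Matrix.of_apply]
    show coeff (4*p+1-(2*(p-1-(a:ℕ)))-(2*(p-1-(b:ℕ)))) B = (0 : Matrix (Fin p) (Fin p) ℚ) a b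
    have h1 : 4*p+1-(2*(p-1-(a:ℕ)))-(2*(p-1-(b:ℕ))) = 2*((a:ℕ)+(b:ℕ)+1)+3 := by omega
    rw [h1, coeffB_odd]
    simp
  · simp only [Matrix.submatrix_apply, Matrix.fromBlocks_apply₁₂, Sm, Matrix.of_apply, Am]
    show coeff (4*p+1-(2*(p-1-(a:ℕ)))-(2*(p-1-(b:ℕ))+1)) B = coeff (2*((a:ℕ)+(b:ℕ))+4) B
    have h1 : 4*p+1-(2*(p-1-(a:ℕ)))-(2*(p-1-(b:ℕ))+1) = 2*((a:ℕ)+(b:ℕ))+4 := by omega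
    rw [h1]
  · simp only [Matrix.submatrix_apply, Matrix.fromBlocks_apply₂₁, Sm, Matrix.of_apply, Am]
    show coeff (4*p+1-(2*(p-1-(a:ℕ))+1)-(2*(p-1-(b:ℕ)))) B = coeff (2*((a:ℕ)+(b:ℕ))+4) B
    have h1 : 4*p+1-(2*(p-1-(a:ℕ))+1)-(2*(p-1-(b:ℕ))) = 2*((a:ℕ)+(b:ℕ))+4 := by omega
    rw [h1]
  · simp only [Matrix.submatrix_apply, Matrix.fromBlocks_apply₂₂, Sm, Matrix.of_apply]
    show coeff (4*p+1-(2*(p-1-(a:ℕ))+1)-(2*(p-1-(b:ℕ))+1)) B = (0 : Matrix (Fin p) (Fin p) ℚ) a b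
    have h1 : 4*p+1-(2*(p-1-(a:ℕ))+1)-(2*(p-1-(b:ℕ))+1) = 2*((a:ℕ)+(b:ℕ))+3 := by omega
    rw [h1, coeffB_odd]
    simp

lemma detSm (p : ℕ) : (Sm p).det = (-1:ℚ)^p * ((Am p).det)^2 := by
  have h0 := Matrix.det_submatrix_equiv_self (ee p) (Sm p)
  rw [hSub] at h0
  rw [← h0]
  have m12 : (fromBlocks (1 : Matrix (Fin p) (Fin p) ℚ) (1 : Matrix (Fin p) (Fin p) ℚ) (0 : Matrix (Fin p) (Fin p) ℚ) (1 : Matrix (Fin p) (Fin p) ℚ)) * (fromBlocks (1 : Matrix (Fin p) (Fin p) ℚ) (0 : Matrix (Fin p) (Fin p) ℚ) (-1 : Matrix (Fin p) (Fin p) ℚ) (1 : Matrix (Fin p) (Fin p) ℚ))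
      = fromBlocks (0 : Matrix (Fin p) (Fin p) ℚ) (1 : Matrix (Fin p) (Fin p) ℚ) (-1 : Matrix (Fin p) (Fin p) ℚ) (1 : Matrix (Fin p) (Fin p) ℚ) := by
    rw [Matrix.fromBlocks_multiply]
    simp
  have m123 : (fromBlocks (0 : Matrix (Fin p) (Fin p) ℚ) (1 : Matrix (Fin p) (Fin p) ℚ) (-1 : Matrix (Fin p) (Fin p) ℚ) (1 : Matrix (Fin p) (Fin p) ℚ)) * (fromBlocks (1 : Matrix (Fin p) (Fin p) ℚ) (1 : Matrix (Fin p) (Fin p) ℚ) (0 : Matrix (Fin p) (Fin p) ℚ) (1 : Matrix (Fin p) (Fin p) ℚ))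
      = fromBlocks (0 : Matrix (Fin p) (Fin p) ℚ) (1 : Matrix (Fin p) (Fin p) ℚ) (-1 : Matrix (Fin p) (Fin p) ℚ) (0 : Matrix (Fin p) (Fin p) ℚ) := by
    rw [Matrix.fromBlocks_multiply]
    simp
  have m1234 : (fromBlocks (0 : Matrix (Fin p) (Fin p) ℚ) (1 : Matrix (Fin p) (Fin p) ℚ) (-1 : Matrix (Fin p) (Fin p) ℚ) (0 : Matrix (Fin p) (Fin p) ℚ)) * (fromBlocks (-1 : Matrix (Fin p) (Fin p) ℚ) (0 : Matrix (Fin p) (Fin p) ℚ) (0 : Matrix (Fin p) (Fin p) ℚ) (1 : Matrix (Fin p) (Fin p) ℚ))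
      = fromBlocks (0 : Matrix (Fin p) (Fin p) ℚ) (1 : Matrix (Fin p) (Fin p) ℚ) (1 : Matrix (Fin p) (Fin p) ℚ) (0 : Matrix (Fin p) (Fin p) ℚ) := by
    rw [Matrix.fromBlocks_multiply]
    simp
  have mJA : (fromBlocks (0 : Matrix (Fin p) (Fin p) ℚ) (1 : Matrix (Fin p) (Fin p) ℚ) (1 : Matrix (Fin p) (Fin p) ℚ) (0 : Matrix (Fin p) (Fin p) ℚ)) * (fromBlocks (Am p) (0 : Matrix (Fin p) (Fin p) ℚ) (0 : Matrix (Fin p) (Fin p) ℚ) (Am p))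
      = fromBlocks (0 : Matrix (Fin p) (Fin p) ℚ) (Am p) (Am p) (0 : Matrix (Fin p) (Fin p) ℚ) := by
    rw [Matrix.fromBlocks_multiply]
    simp
  rw [← mJA, ← m1234, ← m123, ← m12]
  rw [Matrix.det_mul, Matrix.det_mul, Matrix.det_mul, Matrix.det_mul]
  simp only [Matrix.det_fromBlocks_zero₂₁, Matrix.det_fromBlocks_zero₁₂, Matrix.det_one]
  have hneg : ((-1 : Matrix (Fin p) (Fin p) ℚ)).det = (-1:ℚ)^p := by
    rw [show (-1 : Matrix (Fin p) (Fin p) ℚ) = (-1 : ℚ) • 1 by simp, Matrix.det_smul,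
      Matrix.det_one, Fintype.card_fin, mul_one]
  rw [hneg] <;> ring

noncomputable def A0 (p : ℕ) : ℚ := ∏ i ∈ range (2*p), ((2*p+3+i).factorial : ℚ)
noncomputable def Bg (p : ℕ) : ℚ := ∏ n ∈ range p,
  (((2*n+2).factorial : ℚ)^2 / (((4*n+4).factorial : ℚ) * ((4*n+5).factorial : ℚ)))
noncomputable def C0 (p : ℕ) : ℚ := ∏ i ∈ range (2*p), ((2+i).factorial : ℚ)

lemma Arel (p : ℕ) :
    A0 (p+1) * ((2*p+3).factorial : ℚ) * ((2*p+4).factorial : ℚ)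
    = A0 p * ((4*p+3).factorial : ℚ) * ((4*p+4).factorial : ℚ)
      * ((4*p+5).factorial : ℚ) * ((4*p+6).factorial : ℚ) := by
  have h1 : ∏ i ∈ range (2*p+2), (((2*p+3+i).factorial : ℚ))
      = A0 p * ((4*p+3).factorial : ℚ) * ((4*p+4).factorial : ℚ) := by
    rw [Finset.prod_range_succ, Finset.prod_range_succ]
    have e1 : 2*p+3+(2*p) = 4*p+3 := by omega
    have e2 : 2*p+3+(2*p+1) = 4*p+4 := by omega
    rw [e1, e2, A0]
  have h2 : ∏ i ∈ range (2*p+2), (((2*p+3+i).factorial : ℚ))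
      = ((∏ i ∈ range (2*p), (((2*p+5+i).factorial : ℚ))) * ((2*p+4).factorial : ℚ))
        * ((2*p+3).factorial : ℚ) := by
    rw [Finset.prod_range_succ' (fun i => ((2*p+3+i).factorial : ℚ)) (2*p+1)]
    have e0 : 2*p+3+0 = 2*p+3 := by omega
    rw [e0]
    congr 1
    rw [Finset.prod_range_succ' (fun i => ((2*p+3+(i+1)).factorial : ℚ)) (2*p)]
    have e1 : 2*p+3+(0+1) = 2*p+4 := by omega
    rw [e1]
    congr 1
    refine Finset.prod_congr rfl fun i _ => ?_
    have e2 : 2*p+3+(i+1+1) = 2*p+5+i := by omega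
    rw [e2]
  have h3 : A0 (p+1)
      = (∏ i ∈ range (2*p), (((2*p+5+i).factorial : ℚ)))
        * ((4*p+5).factorial : ℚ) * ((4*p+6).factorial : ℚ) := by
    rw [A0, show 2*(p+1) = 2*p+2 from by omega, Finset.prod_range_succ, Finset.prod_range_succ]
    have e1 : 2*p+2+3+(2*p) = 4*p+5 := by omega
    have e2 : 2*p+2+3+(2*p+1) = 4*p+6 := by omega
    rw [e1, e2]
    try (congr 2
         refine Finset.prod_congr rfl fun i _ => ?_
         have e3 : 2*p+2+3+i = 2*p+5+i := by omega
         rw [e3])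
  have h4 := h2.symm.trans h1
  rw [h3]
  linear_combination ((4*p+5).factorial : ℚ) * ((4*p+6).factorial : ℚ) * h4

lemma FIP (p : ℕ) : A0 p * (Bg p)^2 * ((p:ℚ)+1) * ((2*p+1).factorial : ℚ)^2 = C0 p := by
  induction p with
  | zero => simp [A0, Bg, C0]
  | succ p ih =>
    have hC : C0 (p+1) = C0 p * ((2*p+2).factorial : ℚ) * ((2*p+3).factorial : ℚ) := by
      rw [C0, show 2*(p+1) = 2*p+2 from by omega, Finset.prod_range_succ, Finset.prod_range_succ]
      have e1 : 2+2*p = 2*p+2 := by omega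
      have e2 : 2+(2*p+1) = 2*p+3 := by omega
      rw [e1, e2, C0]
    have hB : Bg (p+1) = Bg p
        * (((2*p+2).factorial : ℚ)^2 / (((4*p+4).factorial : ℚ) * ((4*p+5).factorial : ℚ))) := by
      rw [Bg, Finset.prod_range_succ, Bg]
    have hA := Arel p
    -- successor factorial expansions
    have s1 : ((2*p+2).factorial : ℚ) = (2*(p:ℚ)+2) * ((2*p+1).factorial : ℚ) := by
      rw [show 2*p+2 = (2*p+1)+1 from by omega, Nat.factorial_succ]
      push_cast; ring
    have s2 : ((2*p+3).factorial : ℚ) = (2*(p:ℚ)+3) * (2*(p:ℚ)+2) * ((2*p+1).factorial : ℚ) := by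
      rw [show 2*p+3 = (2*p+2)+1 from by omega, Nat.factorial_succ]
      push_cast
      rw [s1]; push_cast; ring
    have s3 : ((2*p+4).factorial : ℚ) = (2*(p:ℚ)+4) * (2*(p:ℚ)+3) * (2*(p:ℚ)+2) * ((2*p+1).factorial : ℚ) := by
      rw [show 2*p+4 = (2*p+3)+1 from by omega, Nat.factorial_succ]
      push_cast
      rw [s2]; push_cast; ring
    have s4 : ((4*p+4).factorial : ℚ) = (4*(p:ℚ)+4) * ((4*p+3).factorial : ℚ) := by
      rw [show 4*p+4 = (4*p+3)+1 from by omega, Nat.factorial_succ]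
      push_cast; ring
    have s5 : ((4*p+5).factorial : ℚ) = (4*(p:ℚ)+5) * (4*(p:ℚ)+4) * ((4*p+3).factorial : ℚ) := by
      rw [show 4*p+5 = (4*p+4)+1 from by omega, Nat.factorial_succ]
      push_cast
      rw [s4]; push_cast; ring
    have s6 : ((4*p+6).factorial : ℚ) = (4*(p:ℚ)+6) * (4*(p:ℚ)+5) * (4*(p:ℚ)+4) * ((4*p+3).factorial : ℚ) := by
      rw [show 4*p+6 = (4*p+5)+1 from by omega, Nat.factorial_succ]
      push_cast
      rw [s5]; push_cast; ring
    have hf21 : ((2*p+1).factorial : ℚ) ≠ 0 := Nat.cast_ne_zero.mpr (Nat.factorial_ne_zero _)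
    have hf43 : ((4*p+3).factorial : ℚ) ≠ 0 := Nat.cast_ne_zero.mpr (Nat.factorial_ne_zero _)
    -- express A0 (p+1)
    have hA1 : A0 (p+1) = A0 p * ((4*p+3).factorial : ℚ) * ((4*p+4).factorial : ℚ)
        * ((4*p+5).factorial : ℚ) * ((4*p+6).factorial : ℚ)
        / (((2*p+3).factorial : ℚ) * ((2*p+4).factorial : ℚ)) := by
      rw [eq_div_iff (by positivity)]
      linear_combination hA
    have hgoal : 2*(p+1)+1 = 2*p+3 := by omega
    rw [hgoal, hA1, hB, hC, ← ih]
    rw [s6, s5, s4, s3, s2, s1]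
    push_cast
    field_simp
    ring

lemma refl_fact (p : ℕ) : ∏ i ∈ range (2*p), (((4*p+2-i).factorial : ℚ)) = A0 p := by
  rw [A0, ← Finset.prod_range_reflect (fun i => ((2*p+3+i).factorial : ℚ)) (2*p)]
  refine Finset.prod_congr rfl fun i hi => ?_
  rw [mem_range] at hi
  have e : 2*p+3+(2*p-1-i) = 4*p+2-i := by omega
  rw [e]

lemma prod_pair (f : ℕ → ℚ) (n : ℕ) :
    ∏ i ∈ range (2*n), f i = ∏ i ∈ range n, (f (2*i) * f (2*i+1)) := by
  induction n with
  | zero => simp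
  | succ n ih =>
    rw [show 2*(n+1) = 2*n+1+1 from by omega, Finset.prod_range_succ, Finset.prod_range_succ,
      Finset.prod_range_succ, ih]
    ring

lemma sign_prod (p : ℕ) : ∏ i ∈ range (2*p), (-1:ℚ)^(4*p+2-i) = (-1:ℚ)^p := by
  rw [prod_pair (fun i => (-1:ℚ)^(4*p+2-i)) p]
  have h1 : ∀ i ∈ range p, ((-1:ℚ)^(4*p+2-2*i) * (-1:ℚ)^(4*p+2-(2*i+1))) = -1 := by
    intro i hi
    rw [mem_range] at hi
    have he : Even (4*p+2-2*i) := ⟨2*p+1-i, by omega⟩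
    have ho : Odd (4*p+2-(2*i+1)) := ⟨2*p-i, by omega⟩
    rw [he.neg_one_pow, ho.neg_one_pow]
    ring
  rw [Finset.prod_congr rfl h1, Finset.prod_const, card_range]

lemma A0_pos (p : ℕ) : (0:ℚ) < A0 p :=
  Finset.prod_pos fun i _ => by exact_mod_cast Nat.factorial_pos _

lemma C0_pos (p : ℕ) : (0:ℚ) < C0 p :=
  Finset.prod_pos fun i _ => by exact_mod_cast Nat.factorial_pos _

lemma Bg_ne (p : ℕ) : Bg p ≠ 0 := by
  refine Finset.prod_ne_zero_iff.mpr fun n _ => ?_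
  have h1 : (0:ℚ) < ((2*n+2).factorial : ℚ) := by exact_mod_cast Nat.factorial_pos _
  have h2 : (0:ℚ) < ((4*n+4).factorial : ℚ) := by exact_mod_cast Nat.factorial_pos _
  have h3 : (0:ℚ) < ((4*n+5).factorial : ℚ) := by exact_mod_cast Nat.factorial_pos _
  positivity

end Stmt9

open Stmt9 in
theorem stmt_9 (k : ℕ) (hk : 4 ≤ k) (hmod : k % 4 = 0) :
    (Matrix.of fun i j : Fin (k / 2 - 1 - 1) =>
        (-1 : ℚ) ^ (k - ((i : ℕ) + 2)) *
          ((Nat.factorial (k - ((i : ℕ) + 2)) : ℚ) *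
              (Nat.factorial (k - ((j : ℕ) + 2)) : ℚ) / (Nat.factorial k : ℚ)) *
          (bernoulli (k - ((i : ℕ) + 2) - ((j : ℕ) + 2) + 1) /
            (Nat.factorial (k - ((i : ℕ) + 2) - ((j : ℕ) + 2) + 1) : ℚ))).det
      = 1 / (((k / 4 : ℕ) : ℚ) * (Nat.factorial (k / 2 - 1) : ℚ) ^ 2 *
          ∏ a ∈ Finset.Icc 2 (k / 2 - 1), (k.choose a : ℚ)) := by
  obtain ⟨p, rfl⟩ : ∃ p, k = 4*p+4 := ⟨k/4-1, by omega⟩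
  have hdim : (4*p+4)/2-1-1 = 2*p := by omega
  rw [← Matrix.det_submatrix_equiv_self (finCongr hdim.symm)]
  have hmat : (Matrix.of fun i j : Fin ((4*p+4) / 2 - 1 - 1) =>
        (-1 : ℚ) ^ ((4*p+4) - ((i : ℕ) + 2)) *
          ((Nat.factorial ((4*p+4) - ((i : ℕ) + 2)) : ℚ) *
              (Nat.factorial ((4*p+4) - ((j : ℕ) + 2)) : ℚ) / (Nat.factorial (4*p+4) : ℚ)) *
          (bernoulli ((4*p+4) - ((i : ℕ) + 2) - ((j : ℕ) + 2) + 1) /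
            (Nat.factorial ((4*p+4) - ((i : ℕ) + 2) - ((j : ℕ) + 2) + 1) : ℚ))).submatrix
          (finCongr hdim.symm) (finCongr hdim.symm)
      = Matrix.of (fun i j : Fin (2*p) =>
          ((-1:ℚ)^(4*p+2-(i:ℕ)) * ((4*p+2-(i:ℕ)).factorial : ℚ) / ((4*p+4).factorial : ℚ)) *
          (Matrix.of (fun i' j' : Fin (2*p) =>
            ((4*p+2-(j':ℕ)).factorial : ℚ) * Sm p i' j') i j)) := by
    ext i j
    have hi := i.isLt
    have hj := j.isLt
    simp only [Matrix.submatrix_apply, Matrix.of_apply, finCongr_apply, Fin.coe_cast, Sm]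
    have e1 : 4*p+4 - ((i:ℕ)+2) = 4*p+2-(i:ℕ) := by omega
    have e2 : 4*p+4 - ((j:ℕ)+2) = 4*p+2-(j:ℕ) := by omega
    rw [e1, e2]
    have e3 : 4*p+2-(i:ℕ) - ((j:ℕ)+2) + 1 = 4*p+1-(i:ℕ)-(j:ℕ) := by omega
    rw [e3, coeffB]
    ring
  rw [hmat]
  rw [Matrix.det_mul_column
    (fun i : Fin (2*p) => (-1:ℚ)^(4*p+2-(i:ℕ)) * ((4*p+2-(i:ℕ)).factorial : ℚ) / ((4*p+4).factorial : ℚ))]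
  rw [Matrix.det_mul_row (fun j : Fin (2*p) => ((4*p+2-(j:ℕ)).factorial : ℚ))]
  rw [detSm p, detAm p]
  have hF : (0:ℚ) < ((4*p+4).factorial : ℚ) := by exact_mod_cast Nat.factorial_pos _
  have hu : ∏ i : Fin (2*p),
      ((-1:ℚ)^(4*p+2-(i:ℕ)) * ((4*p+2-(i:ℕ)).factorial : ℚ) / ((4*p+4).factorial : ℚ))
      = ((-1:ℚ)^p) * A0 p / ((4*p+4).factorial : ℚ)^(2*p) := by
    rw [Fin.prod_univ_eq_prod_range
      (fun i => (-1:ℚ)^(4*p+2-i) * ((4*p+2-i).factorial : ℚ) / ((4*p+4).factorial : ℚ)) (2*p)]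
    rw [Finset.prod_div_distrib, Finset.prod_const, card_range, Finset.prod_mul_distrib,
      sign_prod, refl_fact]
  have hv : ∏ j : Fin (2*p), ((4*p+2-(j:ℕ)).factorial : ℚ) = A0 p := by
    rw [Fin.prod_univ_eq_prod_range (fun j => ((4*p+2-j).factorial : ℚ)) (2*p), refl_fact]
  have hdg : (∏ n ∈ range p, dg n) = (-1:ℚ)^p * Bg p := by
    have h1 : ∀ n ∈ range p, dg n
        = (-1) * (((2*n+2).factorial : ℚ)^2 / (((4*n+4).factorial : ℚ) * ((4*n+5).factorial : ℚ))) := by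
      intro n _
      rw [dg]
      ring
    rw [Finset.prod_congr rfl h1, Finset.prod_mul_distrib, Finset.prod_const, card_range, Bg]
  have hs2 : (-1:ℚ)^p * (-1:ℚ)^p = 1 := by
    rw [← pow_add, ← two_mul, pow_mul]
    norm_num
  rw [hu, hv, hdg]
  rw [show (4*p+4)/4 = p+1 from by omega, show (4*p+4)/2-1 = 2*p+1 from by omega]
  have hchoose : ∏ a ∈ Finset.Icc 2 (2*p+1), (((4*p+4).choose a : ℕ) : ℚ)
      = ((4*p+4).factorial : ℚ)^(2*p) / (C0 p * A0 p) := by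
    rw [← Finset.Ico_add_one_right_eq_Icc, Finset.prod_Ico_eq_prod_range]
    rw [show 2*p+1+1-2 = 2*p from by omega]
    have hterm : ∀ i ∈ range (2*p), (((4*p+4).choose (2+i) : ℕ) : ℚ)
        = ((4*p+4).factorial : ℚ) / (((2+i).factorial : ℚ) * ((4*p+2-i).factorial : ℚ)) := by
      intro i hi
      rw [mem_range] at hi
      have hcm := Nat.choose_mul_factorial_mul_factorial (show 2+i ≤ 4*p+4 by omega)
      rw [show 4*p+4-(2+i) = 4*p+2-i from by omega] at hcm
      have hcast := congrArg (Nat.cast : ℕ → ℚ) hcm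
      push_cast at hcast
      rw [eq_div_iff (by
        have h1 : (0:ℚ) < ((2+i).factorial : ℚ) := by exact_mod_cast Nat.factorial_pos _
        have h2 : (0:ℚ) < ((4*p+2-i).factorial : ℚ) := by exact_mod_cast Nat.factorial_pos _
        positivity)]
      linear_combination hcast
    rw [Finset.prod_congr rfl hterm, Finset.prod_div_distrib, Finset.prod_const, card_range,
      Finset.prod_mul_distrib, refl_fact, C0]
  rw [hchoose]
  have hA0 := A0_pos p
  have hC0 := C0_pos p
  have hBg := Bg_ne p
  have hf21 : (0:ℚ) < ((2*p+1).factorial : ℚ) := by exact_mod_cast Nat.factorial_pos _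
  have hp1 : (0:ℚ) < ((p+1 : ℕ) : ℚ) := by positivity
  have hD : ((p+1 : ℕ) : ℚ) * ((2*p+1).factorial : ℚ)^2
      * (((4*p+4).factorial : ℚ)^(2*p) / (C0 p * A0 p)) ≠ 0 :=
    ne_of_gt (mul_pos (mul_pos hp1 (pow_pos hf21 2))
      (div_pos (pow_pos hF _) (mul_pos hC0 hA0)))
  rw [eq_div_iff hD]
  have hkey := FIP p
  have hp1' : ((p+1 : ℕ) : ℚ) = (p:ℚ)+1 := by push_cast; ring
  rw [hp1', ← hkey]
  have hF2 : ((4*p+4).factorial : ℚ)^(2*p) ≠ 0 := ne_of_gt (pow_pos hF _)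
  have hs3 : (-1:ℚ)^(p*2) = 1 := by
    rw [pow_mul, pow_two]
    exact hs2
  have hs4 : (-1:ℚ)^(p*4) = 1 := by
    rw [show p*4 = (p*2)*2 from by ring, pow_mul, hs3, one_pow]
  field_simp
  linear_combination hs4
end

section
/- For all integers n ≥ 1 and r with 0 ≤ r ≤ 2n, the integer ∑_{i=0}^{min(n, 2n−r)} (−1)^i · binom(n,i) · binom(2n−i, r) equals 0 if 0 ≤ r ≤ n−1, and equals binom(n, r−n) if n ≤ r ≤ 2n. -/
open Finset

open Polynomial in
/-- Writing `X = (X + 1) - 1` expands `X ^ n * (X + 1) ^ m` in powers of `X + 1`. -/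
theorem X_pow_mul_X_add_one_pow {R : Type*} [CommRing R] (m n : ℕ) :
    (X : R[X]) ^ n * (X + 1) ^ m
      = ∑ i ∈ range (n + 1), C ((-1) ^ i * (n.choose i : R)) * (X + 1) ^ (m + n - i) := by
  have hX : (X : R[X]) = -1 + (X + 1) := by ring
  rw [hX, add_pow, sum_mul]
  refine sum_congr rfl fun i hi => ?_
  rw [show m + n - i = (n - i) + m by grind, pow_add]
  simp only [map_mul, map_pow, map_neg, map_one, map_natCast]
  ring

open Polynomial in
theorem sum_neg_one_pow_mul_choose_mul_choose_add_sub {R : Type*} [CommRing R] (m n r : ℕ) :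
    ∑ i ∈ range (n + 1), (-1) ^ i * (n.choose i : R) * ((m + n - i).choose r : R)
      = if n ≤ r then (m.choose (r - n) : R) else 0 := by
  have hcoeff := congrArg (coeff · r) (X_pow_mul_X_add_one_pow (R := R) m n)
  simp only [coeff_X_pow_mul', coeff_X_add_one_pow, finsetSum_coeff, coeff_C_mul] at hcoeff
  exact hcoeff.symm

theorem stmt_10_general (n r : ℕ) :
    (∑ i ∈ Finset.range (min n (2 * n - r) + 1),
        (-1 : ℤ) ^ i * (n.choose i : ℤ) * ((2 * n - i).choose r : ℤ))
      = if r < n then 0 else (n.choose (r - n) : ℤ) := by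
  have hvanish : ∀ i ∈ range (n + 1), i ∉ range (min n (2 * n - r) + 1) →
      (-1 : ℤ) ^ i * (n.choose i : ℤ) * ((2 * n - i).choose r : ℤ) = 0 := by
    intro i hi hi'
    simp only [mem_range] at hi hi'
    rw [Nat.choose_eq_zero_of_lt (show 2 * n - i < r by omega), Nat.cast_zero, mul_zero]
  rw [sum_subset (range_subset_range.mpr (by omega)) hvanish, two_mul,
    sum_neg_one_pow_mul_choose_mul_choose_add_sub]
  simp only [← not_le, ite_not]

theorem stmt_10 (n r : ℕ) (hn : 1 ≤ n) (hr : r ≤ 2 * n) :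
    (∑ i ∈ Finset.range (min n (2 * n - r) + 1),
        (-1 : ℤ) ^ i * (n.choose i : ℤ) * ((2 * n - i).choose r : ℤ))
      = if r < n then 0 else (n.choose (r - n) : ℤ) :=
  stmt_10_general n r
end

section
/- For every integer m ≥ 1, the following identity holds in the polynomial ring ℚ[a,b]: ∑_{r=0}^{m−1} ( binom(m,r) · B_r / (m·(m−r+1)) ) · a^r · ((a+b)^{m−r+1} − b^{m−r+1}) = −(B_m/m)·a^{m+1} + (1/m)·a·b^m. -/
open Finset MvPolynomial

/-!
Since `C(m, r) / (m - r + 1) = C(m + 1, r) / (m + 1)`, the left side is `1 / (m (m + 1))` times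
the homogenization `∑ r, C(m + 1, r) B_r a^r ((a + b)^(m+1-r) - b^(m+1-r))` of
`B_{m+1}(x + 1) - B_{m+1}(x) = (m + 1) x^m` (at `x = b / a`), with its terms `r = m` and
`r = m + 1` removed; these contribute `(m + 1) B_m a^(m+1)` and `0`. The identity in `ℚ[a, b]`
follows from the one in `ℚ` because `ℚ` is infinite.
-/

lemma pow_mul_bernoulli_eval_div (n : ℕ) {a : ℚ} (ha : a ≠ 0) (x : ℚ) :
    a ^ n * (Polynomial.bernoulli n).eval (x / a)
      = ∑ i ∈ range (n + 1), bernoulli i * n.choose i * a ^ i * x ^ (n - i) := by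
  rw [Polynomial.bernoulli, Polynomial.eval_finsetSum, mul_sum]
  refine sum_congr rfl fun i hi => ?_
  rw [Polynomial.eval_monomial, div_pow,
    ← Nat.add_sub_of_le (Nat.lt_succ_iff.mp (mem_range.mp hi)), pow_add, Nat.add_sub_cancel_left]
  field_simp

lemma sum_bernoulli_mul_choose_mul_pow_add_sub_pow (n : ℕ) (a b : ℚ) :
    ∑ i ∈ range (n + 2), bernoulli i * (n + 1).choose i * a ^ i *
        ((a + b) ^ (n + 1 - i) - b ^ (n + 1 - i))
      = (n + 1) * a * b ^ n := by
  rcases eq_or_ne a 0 with rfl | ha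
  · simp
  simp_rw [mul_sub, sum_sub_distrib, ← pow_mul_bernoulli_eval_div (n + 1) ha, ← mul_sub,
    add_div, div_self ha, Polynomial.bernoulli_eval_one_add, Nat.add_sub_cancel, div_pow]
  push_cast
  field_simp
  ring

lemma cast_choose_div_sub_add_one {m r : ℕ} (h : r ≤ m) :
    (m.choose r : ℚ) / (m - r + 1) = (m + 1).choose r / (m + 1) := by
  have hr : (m : ℚ) - r + 1 ≠ 0 := by
    have : (r : ℚ) ≤ m := by exact_mod_cast h
    linarith
  rw [div_eq_div_iff hr (by positivity)]
  exact_mod_cast (Nat.choose_mul_succ_eq m r).trans (by rw [Nat.sub_add_comm h])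

lemma sum_range_choose_bernoulli_div_mul_pow_add_sub_pow (m : ℕ) (a b : ℚ) :
    ∑ r ∈ range m,
        (m.choose r : ℚ) * bernoulli r / ((m : ℚ) * ((m : ℚ) - (r : ℚ) + 1)) * a ^ r *
          ((a + b) ^ (m - r + 1) - b ^ (m - r + 1))
      = -(bernoulli m / (m : ℚ)) * a ^ (m + 1) + 1 / (m : ℚ) * a * b ^ m := by
  have hterm : ∀ r ∈ range m,
      (m.choose r : ℚ) * bernoulli r / ((m : ℚ) * ((m : ℚ) - (r : ℚ) + 1)) * a ^ r *
          ((a + b) ^ (m - r + 1) - b ^ (m - r + 1))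
        = 1 / (m + 1) / m * (bernoulli r * (m + 1).choose r * a ^ r *
            ((a + b) ^ (m + 1 - r) - b ^ (m + 1 - r))) := by
    intro r hr
    have hrm : r ≤ m := (mem_range.mp hr).le
    rw [Nat.sub_add_comm hrm, mul_comm (m : ℚ), ← div_div, mul_div_right_comm,
      cast_choose_div_sub_add_one hrm]
    ring
  have hfull := sum_bernoulli_mul_choose_mul_pow_add_sub_pow m a b
  rw [sum_range_succ, sum_range_succ, Nat.sub_self, Nat.choose_succ_self_right,
    Nat.add_sub_cancel_left] at hfull
  rw [sum_congr rfl hterm, ← mul_sum,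
    eq_sub_of_add_eq (eq_sub_of_add_eq hfull)]
  push_cast
  field_simp
  ring

theorem stmt_12_general (m : ℕ) :
    (∑ r ∈ Finset.range m,
        MvPolynomial.C ((m.choose r : ℚ) * bernoulli r / ((m : ℚ) * ((m : ℚ) - (r : ℚ) + 1))) *
          (MvPolynomial.X 0 : MvPolynomial (Fin 2) ℚ) ^ r *
          ((MvPolynomial.X 0 + MvPolynomial.X 1) ^ (m - r + 1) -
            (MvPolynomial.X 1) ^ (m - r + 1)))
      = MvPolynomial.C (-(bernoulli m / (m : ℚ))) *
            (MvPolynomial.X 0 : MvPolynomial (Fin 2) ℚ) ^ (m + 1)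
          + MvPolynomial.C (1 / (m : ℚ)) * (MvPolynomial.X 0) * (MvPolynomial.X 1) ^ m := by
  refine MvPolynomial.funext fun x => ?_
  simp only [map_sum, eval_mul, eval_sub, eval_add, eval_pow, eval_C, eval_X]
  exact sum_range_choose_bernoulli_div_mul_pow_add_sub_pow m (x 0) (x 1)

theorem stmt_12 (m : ℕ) (hm : 1 ≤ m) :
    (∑ r ∈ Finset.range m,
        MvPolynomial.C ((m.choose r : ℚ) * bernoulli r / ((m : ℚ) * ((m : ℚ) - (r : ℚ) + 1))) *
          (MvPolynomial.X 0 : MvPolynomial (Fin 2) ℚ) ^ r *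
          ((MvPolynomial.X 0 + MvPolynomial.X 1) ^ (m - r + 1) -
            (MvPolynomial.X 1) ^ (m - r + 1)))
      = MvPolynomial.C (-(bernoulli m / (m : ℚ))) *
            (MvPolynomial.X 0 : MvPolynomial (Fin 2) ℚ) ^ (m + 1)
          + MvPolynomial.C (1 / (m : ℚ)) * (MvPolynomial.X 0) * (MvPolynomial.X 1) ^ m :=
  stmt_12_general m
end

section
/- For all integers m and ℓ with 1 < ℓ < m, one has ∑_{r=0}^{ℓ−1} binom(m−r, m−ℓ) · binom(m,r) · B_r = 0 in ℚ. -/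
/-!
Since `(m - r).choose (m - l) * m.choose r = m.choose l * l.choose r`, the sum equals
`m.choose l * ∑_{r < l} l.choose r * B_r`, and the inner sum vanishes for `l ≠ 1` by the
defining recurrence of the Bernoulli numbers (`sum_bernoulli`).
-/

open Finset

theorem Nat.choose_sub_mul_choose {m l r : ℕ} (hrl : r ≤ l) (hlm : l ≤ m) :
    (m - r).choose (m - l) * m.choose r = m.choose l * l.choose r := by
  rw [Nat.choose_mul hrl, mul_comm, ← Nat.choose_symm (by omega : m - l ≤ m - r)]
  congr 2
  omega

theorem stmt_13 (m l : ℕ) (hl : 1 < l) (hlm : l < m) :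
    (∑ r ∈ Finset.range l,
        ((m - r).choose (m - l) : ℚ) * (m.choose r : ℚ) * bernoulli r) = 0 := by
  have hterm : ∀ r ∈ range l, ((m - r).choose (m - l) : ℚ) * (m.choose r : ℚ) * bernoulli r
      = m.choose l * ((l.choose r : ℚ) * bernoulli r) := fun r hr => by
    rw [← mul_assoc, ← Nat.cast_mul, ← Nat.cast_mul,
      Nat.choose_sub_mul_choose (mem_range.mp hr).le hlm.le]
  rw [sum_congr rfl hterm, ← mul_sum, sum_bernoulli, if_neg hl.ne', mul_zero]
end

section
/- Let k ≥ 3 be an integer and set k' = ⌊(k−1)/2⌋. Then the k'×k' real matrix M with entries M_{i,j} = ∫_0^∞ I_0(t)^i · K_0(t)^{k−i} · t^{2j−1} dt, for 1 ≤ i, j ≤ k', is invertible. -/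
/-!
By Andréief's identity, `n! · det M = ∫ det [φₐ(x_b)] · det [ψₐ(x_b)]` over `(0, ∞)ⁿ`, where
`φₐ = I₀^a K₀^(k-a)` and `ψ_b = t^(2b-1)`. Writing `φₐ = I₀ K₀^(k-1) · (I₀/K₀)^(a-1)` and
`ψ_b = t · (t²)^(b-1)`, both determinants are Vandermonde determinants with positive column
weights in the strictly increasing functions `I₀/K₀` and `t²`. Hence they are positive at
increasing points, the (symmetric) integrand is nonnegative and positive on an open box, and
`det M > 0`. Convergence comes from `I₀ t ≤ eᵗ`, `K₀ t ≤ e^(1-t) K₀ 1` for `t ≥ 1`, and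
`K₀(t)ʲ ≤ 2 jʲ / t`.
-/

open MeasureTheory

/-- The modified Bessel function of the first kind of order zero,
`I₀(t) = (1/π) ∫_0^π exp(t cos θ) dθ`. -/
noncomputable def I0 (t : ℝ) : ℝ :=
  (1 / Real.pi) * ∫ θ in (0 : ℝ)..Real.pi, Real.exp (t * Real.cos θ)

/-- The modified Bessel function of the second kind of order zero,
`K₀(t) = ∫_0^∞ exp(−t cosh u) du`. -/
noncomputable def K0 (t : ℝ) : ℝ :=
  ∫ u in Set.Ioi (0 : ℝ), Real.exp (-(t * Real.cosh u))

open Real Set Matrix Equiv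

lemma exp_div_two_le_cosh (u : ℝ) : exp u / 2 ≤ cosh u := by
  rw [cosh_eq]; linarith [exp_pos (-u)]

lemma exp_neg_le_rpow_neg {y ε : ℝ} (hy : 0 < y) (hε₀ : 0 ≤ ε) (hε₁ : ε ≤ 1) :
    exp (-y) ≤ y ^ (-ε) := by
  rw [exp_neg, rpow_neg hy.le]
  gcongr
  calc y ^ ε = (1 + (y - 1)) ^ ε := by ring_nf
    _ ≤ 1 + ε * (y - 1) := rpow_one_add_le_one_add_mul_self (by linarith) hε₀ hε₁
    _ ≤ y + 1 := by nlinarith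
    _ ≤ exp y := add_one_le_exp y

lemma integrableOn_exp_neg_mul_cosh {t : ℝ} (ht : 0 < t) :
    IntegrableOn (fun u => exp (-(t * cosh u))) (Ioi 0) := by
  refine (integrableOn_exp_mul_Ioi (neg_lt_zero.2 (half_pos ht)) 0).mono' (by fun_prop) ?_
  filter_upwards [ae_restrict_mem measurableSet_Ioi] with u hu
  rw [norm_of_nonneg (exp_pos _).le, exp_le_exp]
  nlinarith [exp_div_two_le_cosh u, add_one_le_exp u]

lemma K0_pos {t : ℝ} (ht : 0 < t) : 0 < K0 t :=
  have : NeZero (volume.restrict (Ioi (0 : ℝ))) := ⟨by simp [Measure.restrict_eq_zero]⟩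
  integral_exp_pos (integrableOn_exp_neg_mul_cosh ht)

lemma K0_le_exp_mul_K0 {s t : ℝ} (hs : 0 < s) (hst : s ≤ t) :
    K0 t ≤ exp (s - t) * K0 s := by
  rw [K0, K0, ← integral_const_mul]
  refine integral_mono (integrableOn_exp_neg_mul_cosh (hs.trans_le hst))
    ((integrableOn_exp_neg_mul_cosh hs).const_mul _) fun u => ?_
  rw [← exp_add, exp_le_exp]
  nlinarith [one_le_cosh u]

lemma K0_strictAntiOn : StrictAntiOn K0 (Ioi 0) := fun s hs t _ hst =>
  calc K0 t ≤ exp (s - t) * K0 s := K0_le_exp_mul_K0 hs hst.le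
    _ < K0 s := mul_lt_of_lt_one_left (K0_pos hs) (exp_lt_one_iff.2 (by linarith))

lemma K0_le_rpow {t ε : ℝ} (ht : 0 < t) (hε₀ : 0 < ε) (hε₁ : ε ≤ 1) :
    K0 t ≤ (t / 2) ^ (-ε) / ε := by
  have hexp : ∫ u in Ioi (0 : ℝ), exp (-ε * u) = 1 / ε := by
    rw [integral_exp_mul_Ioi (by linarith) 0]; field_simp; simp
  rw [K0, div_eq_mul_one_div, ← hexp, ← integral_const_mul]
  refine setIntegral_mono_on (integrableOn_exp_neg_mul_cosh ht)
    ((integrableOn_exp_mul_Ioi (by linarith) 0).const_mul _) measurableSet_Ioi fun u _ => ?_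
  calc exp (-(t * cosh u)) ≤ exp (-(t / 2 * exp u)) := by
        rw [exp_le_exp]; nlinarith [exp_div_two_le_cosh u]
    _ ≤ (t / 2 * exp u) ^ (-ε) := exp_neg_le_rpow_neg (by positivity) hε₀.le hε₁
    _ = (t / 2) ^ (-ε) * exp (-ε * u) := by
        rw [mul_rpow (by positivity) (exp_pos u).le, ← exp_mul, mul_comm u]

lemma K0_pow_le {t : ℝ} (ht : 0 < t) {j : ℕ} (hj : j ≠ 0) : K0 t ^ j ≤ j ^ j * (2 / t) := by
  calc K0 t ^ j ≤ ((t / 2) ^ (-(j : ℝ)⁻¹) / (j : ℝ)⁻¹) ^ j := by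
        gcongr
        · exact (K0_pos ht).le
        · exact K0_le_rpow ht (by positivity)
            (inv_le_one_of_one_le₀ (by exact_mod_cast Nat.one_le_iff_ne_zero.2 hj))
    _ = j ^ j * (2 / t) := by
        rw [rpow_neg (by positivity), div_inv_eq_mul, mul_pow, inv_pow,
          rpow_inv_natCast_pow (by positivity) hj, inv_div, mul_comm]

lemma measurable_K0 : Measurable K0 :=
  (StronglyMeasurable.integral_prod_right (f := fun t u => exp (-(t * cosh u)))
    (by fun_prop)).measurable

lemma intervalIntegrable_exp_mul_cos (t : ℝ) (a b : ℝ) :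
    IntervalIntegrable (fun θ => exp (t * cos θ)) volume a b :=
  (by fun_prop : Continuous fun θ => exp (t * cos θ)).intervalIntegrable a b

lemma integral_exp_neg_mul_cos (t : ℝ) :
    ∫ θ in (0 : ℝ)..π, exp (-t * cos θ) = ∫ θ in (0 : ℝ)..π, exp (t * cos θ) := by
  simpa [cos_pi_sub] using
    intervalIntegral.integral_comp_sub_left (fun θ => exp (t * cos θ)) π (a := 0) (b := π)

lemma I0_eq_integral_cosh (t : ℝ) : I0 t = π⁻¹ * ∫ θ in (0 : ℝ)..π, cosh (t * cos θ) := by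
  simp_rw [cosh_eq, intervalIntegral.integral_div]
  rw [intervalIntegral.integral_add (intervalIntegrable_exp_mul_cos t _ _)
    (by simpa using intervalIntegrable_exp_mul_cos (-t) 0 π)]
  simp_rw [← neg_mul, integral_exp_neg_mul_cos, I0]
  ring

lemma one_le_I0 (t : ℝ) : 1 ≤ I0 t := by
  have h : ∫ _θ in (0 : ℝ)..π, (1 : ℝ) ≤ ∫ θ in (0 : ℝ)..π, cosh (t * cos θ) :=
    intervalIntegral.integral_mono_on pi_pos.le intervalIntegrable_const
      ((by fun_prop : Continuous fun θ => cosh (t * cos θ)).intervalIntegrable _ _)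
      fun θ _ => one_le_cosh _
  rw [I0_eq_integral_cosh, le_inv_mul_iff₀ pi_pos]
  simpa using h

lemma I0_le_exp {t : ℝ} (ht : 0 ≤ t) : I0 t ≤ exp t := by
  have h : ∫ θ in (0 : ℝ)..π, exp (t * cos θ) ≤ ∫ _θ in (0 : ℝ)..π, exp t :=
    intervalIntegral.integral_mono_on pi_pos.le (intervalIntegrable_exp_mul_cos t _ _)
      intervalIntegrable_const fun θ _ => exp_le_exp.2 (mul_le_of_le_one_right ht (cos_le_one θ))
  rw [I0, one_div, inv_mul_le_iff₀ pi_pos]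
  simpa using h

lemma I0_monotoneOn : MonotoneOn I0 (Ici 0) := by
  intro s hs t _ hst
  simp_rw [I0_eq_integral_cosh]
  gcongr
  refine intervalIntegral.integral_mono_on pi_pos.le
    ((by fun_prop : Continuous fun θ => cosh (s * cos θ)).intervalIntegrable _ _)
    ((by fun_prop : Continuous fun θ => cosh (t * cos θ)).intervalIntegrable _ _) fun θ _ => ?_
  rw [cosh_le_cosh, abs_mul, abs_mul, abs_of_nonneg (mem_Ici.1 hs),
    abs_of_nonneg ((mem_Ici.1 hs).trans hst)]
  gcongr

lemma continuous_I0 : Continuous I0 :=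
  continuous_const.mul
    (intervalIntegral.continuous_parametric_intervalIntegral_of_continuous' (by fun_prop) _ _)

lemma I0_div_K0_strictMonoOn : StrictMonoOn (fun t => I0 t / K0 t) (Ioi 0) :=
  fun _ hs t ht hst =>
    div_lt_div₀' (I0_monotoneOn (mem_Ici_of_Ioi hs) (mem_Ici_of_Ioi ht) hst.le)
      (K0_strictAntiOn hs ht hst) (zero_lt_one.trans_le (one_le_I0 t)) (K0_pos ht)

lemma integrableOn_I0_pow_mul_K0_pow_mul_pow {a j m : ℕ} (haj : a < j) (hm : m ≠ 0) :
    IntegrableOn (fun t => I0 t ^ a * K0 t ^ j * t ^ m) (Ioi 0) := by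
  have hmeas : Measurable fun t => I0 t ^ a * K0 t ^ j * t ^ m := by
    have := continuous_I0.measurable; have := measurable_K0; fun_prop
  rw [← Ioc_union_Ioi_eq_Ioi zero_le_one]
  refine IntegrableOn.union ?_ ?_
  · refine Measure.integrableOn_of_bounded (M := exp 1 ^ a * (j ^ j * 2))
      measure_Ioc_lt_top.ne hmeas.aestronglyMeasurable ?_
    filter_upwards [ae_restrict_mem measurableSet_Ioc] with t ⟨ht₀, ht₁⟩
    have hI : I0 t ^ a ≤ exp 1 ^ a := by
      gcongr
      · exact zero_le_one.trans (one_le_I0 t)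
      · exact (I0_le_exp ht₀.le).trans (exp_le_exp.2 ht₁)
    have hKt : K0 t ^ j * t ^ m ≤ j ^ j * 2 :=
      calc K0 t ^ j * t ^ m ≤ j ^ j * (2 / t) * t := by
            gcongr
            · exact K0_pow_le ht₀ (by omega)
            · exact pow_le_of_le_one ht₀.le ht₁ hm
        _ = j ^ j * 2 := by field_simp
    rw [norm_of_nonneg (by have := K0_pos ht₀; have := one_le_I0 t; positivity), mul_assoc]
    gcongr
    have := K0_pos ht₀; positivity
  · have hΓ : IntegrableOn (fun t : ℝ => exp (-t) * t ^ m) (Ioi 0) := by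
      simpa using GammaIntegral_convergent (s := m + 1) (by positivity)
    refine ((hΓ.mono_set (Ioi_subset_Ioi zero_le_one)).const_mul ((exp 1 * K0 1) ^ j)).mono'
      hmeas.aestronglyMeasurable ?_
    filter_upwards [ae_restrict_mem measurableSet_Ioi] with t ht
    have ht₀ : 0 < t := zero_lt_one.trans ht
    have hK : K0 t ^ j ≤ (exp (1 - t) * K0 1) ^ j :=
      pow_le_pow_left₀ (K0_pos ht₀).le (K0_le_exp_mul_K0 one_pos ht.le) j
    have hI : I0 t ^ a ≤ exp t ^ a :=
      pow_le_pow_left₀ (zero_le_one.trans (one_le_I0 t)) (I0_le_exp ht₀.le) a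
    have hexp : exp t ^ a * exp (1 - t) ^ j ≤ exp 1 ^ j * exp (-t) := by
      rw [← exp_nat_mul, ← exp_nat_mul, ← exp_nat_mul, ← exp_add, ← exp_add, exp_le_exp]
      have : (a : ℝ) + 1 ≤ j := by exact_mod_cast haj
      nlinarith
    rw [norm_of_nonneg (by have := K0_pos ht₀; have := one_le_I0 t; positivity)]
    calc I0 t ^ a * K0 t ^ j * t ^ m ≤ exp t ^ a * (exp (1 - t) * K0 1) ^ j * t ^ m := by
          gcongr
          exact pow_nonneg (K0_pos ht₀).le j
      _ = exp t ^ a * exp (1 - t) ^ j * K0 1 ^ j * t ^ m := by ring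
      _ ≤ exp 1 ^ j * exp (-t) * K0 1 ^ j * t ^ m := by
          gcongr
          exact pow_nonneg (K0_pos one_pos).le j
      _ = (exp 1 * K0 1) ^ j * (exp (-t) * t ^ m) := by ring

section PermuteCoordinates

variable {ι α : Type*} [MeasurableSpace α]

lemma piCongrLeft_symm_perm (σ : Perm ι) :
    ⇑(MeasurableEquiv.piCongrLeft (fun _ : ι => α) σ.symm) = fun x => x ∘ σ := by
  ext x i
  simp [MeasurableEquiv.coe_piCongrLeft, Equiv.piCongrLeft_apply]

variable [Fintype ι] {μ : Measure α} [SigmaFinite μ]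

lemma MeasureTheory.Integrable.comp_perm {H : (ι → α) → ℝ}
    (hH : Integrable H (Measure.pi fun _ => μ)) (σ : Perm ι) :
    Integrable (fun x => H (x ∘ σ)) (Measure.pi fun _ => μ) := by
  have := ((measurePreserving_piCongrLeft (fun _ : ι => μ) σ.symm).integrable_comp_emb
    (MeasurableEquiv.measurableEmbedding _)).2 hH
  rwa [piCongrLeft_symm_perm] at this

lemma integral_comp_perm (H : (ι → α) → ℝ) (σ : Perm ι) :
    ∫ x, H (x ∘ σ) ∂(Measure.pi fun _ => μ) = ∫ x, H x ∂(Measure.pi fun _ => μ) := by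
  have := (measurePreserving_piCongrLeft (fun _ : ι => μ) σ.symm).integral_comp' (g := H)
  rwa [piCongrLeft_symm_perm] at this

end PermuteCoordinates

section Andreief

variable {ι α : Type*} [Fintype ι] [DecidableEq ι]

def collocationMatrix (f : ι → α → ℝ) (x : ι → α) : Matrix ι ι ℝ := of fun a b => f a (x b)

lemma det_collocationMatrix_comp_perm (f : ι → α → ℝ) (x : ι → α) (σ : Perm ι) :
    (collocationMatrix f (x ∘ σ)).det = Perm.sign σ * (collocationMatrix f x).det := by
  rw [← det_permute']; rfl

lemma det_collocationMatrix_mul_det_comp_perm (φ ψ : ι → α → ℝ) (x : ι → α) (σ : Perm ι) :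
    (collocationMatrix φ (x ∘ σ)).det * (collocationMatrix ψ (x ∘ σ)).det =
      (collocationMatrix φ x).det * (collocationMatrix ψ x).det := by
  have hsign : ((Perm.sign σ : ℤ) : ℝ) * (Perm.sign σ : ℤ) = 1 := by
    rw [← Int.cast_mul, ← Units.val_mul, Int.units_mul_self, Units.val_one, Int.cast_one]
  rw [det_collocationMatrix_comp_perm, det_collocationMatrix_comp_perm]
  linear_combination (collocationMatrix φ x).det * (collocationMatrix ψ x).det * hsign

lemma det_collocationMatrix_mul_prod (φ ψ : ι → α → ℝ) (x : ι → α) :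
    (collocationMatrix φ x).det * ∏ i, ψ i (x i) =
      ∑ σ : Perm ι, (Perm.sign σ : ℝ) * ∏ i, φ (σ i) (x i) * ψ i (x i) := by
  simp_rw [det_apply', Finset.sum_mul, mul_assoc, ← Finset.prod_mul_distrib]
  rfl

lemma sum_perm_det_collocationMatrix_mul_prod (φ ψ : ι → α → ℝ) (x : ι → α) :
    ∑ σ : Perm ι, (collocationMatrix φ (x ∘ σ)).det * ∏ i, ψ i ((x ∘ σ) i) =
      (collocationMatrix φ x).det * (collocationMatrix ψ x).det := by
  rw [← det_transpose (collocationMatrix ψ x), det_apply' (collocationMatrix ψ x)ᵀ,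
    Finset.mul_sum]
  refine Finset.sum_congr rfl fun σ _ => ?_
  rw [det_collocationMatrix_comp_perm]
  simp [collocationMatrix, mul_assoc, mul_left_comm]

variable [MeasurableSpace α] {μ : Measure α} [SigmaFinite μ] {φ ψ : ι → α → ℝ}

lemma integrable_det_collocationMatrix_mul_prod
    (hint : ∀ a b, Integrable (fun t => φ a t * ψ b t) μ) :
    Integrable (fun x => (collocationMatrix φ x).det * ∏ i, ψ i (x i))
      (Measure.pi fun _ => μ) := by
  simp_rw [det_collocationMatrix_mul_prod]
  exact integrable_finsetSum _ fun σ _ =>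
    (Integrable.fintype_prod fun i => hint _ _).const_mul _

lemma integral_det_collocationMatrix_mul_prod
    (hint : ∀ a b, Integrable (fun t => φ a t * ψ b t) μ) :
    ∫ x, (collocationMatrix φ x).det * ∏ i, ψ i (x i) ∂(Measure.pi fun _ => μ) =
      (of fun a b => ∫ t, φ a t * ψ b t ∂μ).det := by
  simp_rw [det_collocationMatrix_mul_prod]
  rw [integral_finsetSum _ fun σ _ => ?_, det_apply']
  · refine Finset.sum_congr rfl fun σ _ => ?_
    rw [integral_const_mul, integral_fintype_prod_eq_prod fun i t => φ (σ i) t * ψ i t]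
    rfl
  · exact (Integrable.fintype_prod fun i => hint _ _).const_mul _

lemma integrable_det_collocationMatrix_mul_det
    (hint : ∀ a b, Integrable (fun t => φ a t * ψ b t) μ) :
    Integrable (fun x => (collocationMatrix φ x).det * (collocationMatrix ψ x).det)
      (Measure.pi fun _ => μ) := by
  simp_rw [← sum_perm_det_collocationMatrix_mul_prod]
  exact integrable_finsetSum _ fun σ _ =>
    (integrable_det_collocationMatrix_mul_prod hint).comp_perm σ

theorem andreief_identity (hint : ∀ a b, Integrable (fun t => φ a t * ψ b t) μ) :
    (Fintype.card ι).factorial * (of fun a b => ∫ t, φ a t * ψ b t ∂μ).det =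
      ∫ x, (collocationMatrix φ x).det * (collocationMatrix ψ x).det
        ∂(Measure.pi fun _ => μ) := by
  simp_rw [← sum_perm_det_collocationMatrix_mul_prod]
  rw [integral_finsetSum _ fun σ _ =>
    (integrable_det_collocationMatrix_mul_prod hint).comp_perm σ]
  simp_rw [integral_comp_perm (fun x => (collocationMatrix φ x).det * ∏ i, ψ i (x i)),
    integral_det_collocationMatrix_mul_prod hint]
  simp [Fintype.card_perm]

end Andreief

lemma det_mul_pow_pos {n : ℕ} {c v : Fin n → ℝ} (hv : StrictMono v) (hc : ∀ b, 0 < c b) :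
    0 < (of fun a b : Fin n => c b * v b ^ (a : ℕ)).det := by
  have h : (of fun a b : Fin n => c b * v b ^ (a : ℕ)) =
      of fun a b => c b * (vandermonde v)ᵀ a b := by
    ext a b; simp [vandermonde]
  rw [h, det_mul_row, det_transpose, det_vandermonde]
  exact mul_pos (Finset.prod_pos fun b _ => hc b) (Finset.prod_pos fun i _ =>
    Finset.prod_pos fun j hj => sub_pos.2 (hv (Finset.mem_Ioi.1 hj)))

lemma det_collocationMatrix_pos {n : ℕ} {φ : Fin n → ℝ → ℝ} {c r : ℝ → ℝ} {s : Set ℝ}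
    (hφ : ∀ a, ∀ t ∈ s, φ a t = c t * r t ^ (a : ℕ)) (hc : ∀ t ∈ s, 0 < c t)
    (hr : StrictMonoOn r s) {x : Fin n → ℝ} (hx : StrictMono x) (hxs : ∀ i, x i ∈ s) :
    0 < (collocationMatrix φ x).det := by
  have h : collocationMatrix φ x = of fun a b : Fin n => c (x b) * r (x b) ^ (a : ℕ) := by
    ext a b; exact hφ a _ (hxs b)
  rw [h]
  exact det_mul_pow_pos (fun i j hij => hr (hxs i) (hxs j) (hx hij)) fun b => hc _ (hxs b)

lemma det_collocationMatrix_mul_det_nonneg {n : ℕ} {φ ψ : Fin n → ℝ → ℝ} {s : Set ℝ}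
    (hφψ : ∀ x : Fin n → ℝ, StrictMono x → (∀ i, x i ∈ s) →
      0 < (collocationMatrix φ x).det * (collocationMatrix ψ x).det)
    {x : Fin n → ℝ} (hxs : ∀ i, x i ∈ s) :
    0 ≤ (collocationMatrix φ x).det * (collocationMatrix ψ x).det := by
  by_cases hx : Function.Injective x
  · rw [← det_collocationMatrix_mul_det_comp_perm φ ψ x (Tuple.sort x)]
    exact (hφψ _ ((Tuple.monotone_sort x).strictMono_of_injective
      (hx.comp (Tuple.sort x).injective)) fun i => hxs _).le
  · obtain ⟨i, j, hij, hne⟩ := Function.not_injective_iff.1 hx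
    rw [det_zero_of_column_eq hne fun a => by simp [collocationMatrix, hij], zero_mul]

theorem det_integral_pos {n : ℕ} {φ ψ : Fin n → ℝ → ℝ}
    (hint : ∀ a b, IntegrableOn (fun t => φ a t * ψ b t) (Ioi 0))
    (hφ : ∀ x : Fin n → ℝ, StrictMono x → (∀ i, 0 < x i) → 0 < (collocationMatrix φ x).det)
    (hψ : ∀ x : Fin n → ℝ, StrictMono x → (∀ i, 0 < x i) → 0 < (collocationMatrix ψ x).det) :
    0 < (of fun a b => ∫ t in Ioi 0, φ a t * ψ b t).det := by
  set P := Measure.pi fun _ : Fin n => volume.restrict (Ioi (0 : ℝ))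
  set G := fun x : Fin n → ℝ => (collocationMatrix φ x).det * (collocationMatrix ψ x).det
  have hG : ∀ x : Fin n → ℝ, StrictMono x → (∀ i, x i ∈ Ioi 0) → 0 < G x :=
    fun x hx hxs => mul_pos (hφ x hx hxs) (hψ x hx hxs)
  have hG_nonneg : 0 ≤ᵐ[P] G := by
    have : ∀ i : Fin n, ∀ᵐ x ∂P, x i ∈ Ioi 0 := fun i =>
      Measure.tendsto_eval_ae_ae.eventually (ae_restrict_mem measurableSet_Ioi)
    filter_upwards [ae_all_iff.2 this] with x hx
    exact det_collocationMatrix_mul_det_nonneg hG hx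
  set S := Set.pi univ fun i : Fin n => Ioo (i : ℝ) (i + 1)
  have hS : S ⊆ Function.support G := by
    intro x hx
    simp only [S, Set.mem_pi, mem_univ, mem_Ioo, true_implies] at hx
    refine (hG x (fun i j hij => ?_) fun i => ?_).ne'
    · have : (i : ℝ) + 1 ≤ j := by exact_mod_cast hij
      linarith [(hx i).2, (hx j).1]
    · exact lt_of_le_of_lt (Nat.cast_nonneg _) (hx i).1
  have hPS : P S ≠ 0 := by
    simp [P, S, Measure.pi_pi, Measure.restrict_apply measurableSet_Ioo, Ioo_inter_Ioi]
  have hG_int : 0 < ∫ x, G x ∂P :=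
    (integral_pos_iff_support_of_nonneg_ae hG_nonneg
      (integrable_det_collocationMatrix_mul_det hint)).2
        (pos_iff_ne_zero.2 fun h => hPS (measure_mono_null hS h))
  rw [← andreief_identity hint, Fintype.card_fin] at hG_int
  exact pos_of_mul_pos_right hG_int (by positivity)

lemma det_collocationMatrix_I0_pow_mul_K0_pow_pos {n k : ℕ} (hnk : n ≤ k) {x : Fin n → ℝ}
    (hx : StrictMono x) (hxs : ∀ i, 0 < x i) :
    0 < (collocationMatrix
      (fun (a : Fin n) t => I0 t ^ ((a : ℕ) + 1) * K0 t ^ (k - ((a : ℕ) + 1))) x).det := by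
  refine det_collocationMatrix_pos (c := fun t => I0 t * K0 t ^ (k - 1)) (fun a t ht => ?_)
    (fun t ht => ?_) I0_div_K0_strictMonoOn hx hxs
  · have := K0_pos ht
    rw [show k - 1 = k - ((a : ℕ) + 1) + a by omega, pow_add, div_pow]
    field_simp
    ring
  · have := K0_pos ht; have := one_le_I0 t; positivity

lemma det_collocationMatrix_odd_pow_pos {n : ℕ} {x : Fin n → ℝ} (hx : StrictMono x)
    (hxs : ∀ i, 0 < x i) :
    0 < (collocationMatrix (fun (b : Fin n) t => t ^ (2 * ((b : ℕ) + 1) - 1)) x).det := by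
  refine det_collocationMatrix_pos (c := id) (r := (· ^ 2)) (fun b t _ => ?_) (fun t ht => ht)
    ((pow_left_strictMonoOn₀ two_ne_zero).mono Ioi_subset_Ici_self) hx hxs
  rw [show 2 * ((b : ℕ) + 1) - 1 = 2 * b + 1 by omega, pow_succ', pow_mul, id]

theorem stmt_18_general (k : ℕ) :
    IsUnit (Matrix.of fun i j : Fin ((k - 1) / 2) =>
      ∫ t in Set.Ioi (0 : ℝ),
        I0 t ^ ((i : ℕ) + 1) * K0 t ^ (k - ((i : ℕ) + 1)) * t ^ (2 * ((j : ℕ) + 1) - 1)) := by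
  rw [isUnit_iff_isUnit_det, isUnit_iff_ne_zero]
  refine (det_integral_pos (fun a b => ?_)
    (fun x hx hxs => det_collocationMatrix_I0_pow_mul_K0_pow_pos (by omega) hx hxs)
    (fun x hx hxs => det_collocationMatrix_odd_pow_pos hx hxs)).ne'
  exact integrableOn_I0_pow_mul_K0_pow_mul_pow (by have := a.isLt; omega) (by omega)

theorem stmt_18 (k : ℕ) (hk : 3 ≤ k) :
    IsUnit (Matrix.of fun i j : Fin ((k - 1) / 2) =>
      ∫ t in Set.Ioi (0 : ℝ),
        I0 t ^ ((i : ℕ) + 1) * K0 t ^ (k - ((i : ℕ) + 1)) * t ^ (2 * ((j : ℕ) + 1) - 1)) :=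
  stmt_18_general k
end
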